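/- arXiv:1810.02638 — 12 statements merged into one kernel-verified Lean document; each statement's English description precedes it below -/
import Mathlib

section
/- Let Q be a real symmetric n×n matrix whose kernel is exactly the span of the all-ones vector 𝟙. Let L and L' be any two generalized inverses of Q (i.e. Q·L·Q = Q and Q·L'·Q = Q). Then for all balanced vectors ν₁, ν₂ ∈ ℝⁿ one has ν₁ᵀ·L·ν₂ = ν₁ᵀ·L'·ν₂; moreover this common value is symmetric in ν₁ and ν₂, i.e. ν₁ᵀ·L·ν₂ = ν₂ᵀ·L·ν₁. (Paper: Lemma 5.1, independence of the energy pairing from the generalized inverse.) -/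
/-!
A balanced vector is orthogonal to `ker Q = span 𝟙`, hence, `Q` being symmetric, lies in the
range of `Q`. Writing `νᵢ = Q xᵢ` gives `ν₁ᵀ L ν₂ = x₁ᵀ (Q L Q) x₂ = x₁ᵀ Q x₂` for every
generalized inverse `L`, and this is symmetric in `x₁, x₂` because `Q` is.
-/

open Matrix

namespace Matrix

variable {l l' m n K : Type*} [Fintype l] [Fintype l'] [Fintype m] [Fintype n]

theorem exists_mulVec_eq_of_forall_vecMul_eq_zero [Field K] (A : Matrix m n K) (v : m → K)
    (h : ∀ w, w ᵥ* A = 0 → w ⬝ᵥ v = 0) : ∃ x, A *ᵥ x = v := by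
  classical
  suffices v ∈ LinearMap.range A.mulVecLin from this
  rw [← Subspace.dualAnnihilator_dualCoannihilator_eq (W := LinearMap.range A.mulVecLin),
    Submodule.mem_dualCoannihilator]
  intro φ hφ
  set w := (dotProductEquiv K m).symm φ
  have hφw : φ = dotProductEquiv K m w := ((dotProductEquiv K m).apply_symm_apply φ).symm
  have hwA : w ᵥ* A = 0 := dotProduct_eq_zero _ fun x => by
    rw [← dotProduct_mulVec]
    simpa [hφw] using (Submodule.mem_dualAnnihilator φ).mp hφ _ ⟨x, rfl⟩
  simpa [hφw] using h w hwA

theorem mulVec_dotProduct_mulVec_mulVec [CommSemiring K] (A : Matrix l m K) (M : Matrix l l' K)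
    (B : Matrix l' n K) (x : m → K) (y : n → K) :
    A *ᵥ x ⬝ᵥ M *ᵥ (B *ᵥ y) = x ⬝ᵥ (Aᵀ * M * B) *ᵥ y := by
  rw [dotProduct_mulVec, dotProduct_mulVec, dotProduct_mulVec, ← vecMul_transpose, vecMul_vecMul,
    vecMul_vecMul, Matrix.mul_assoc]

theorem IsSymm.dotProduct_mulVec_comm [CommSemiring K] {A : Matrix n n K} (hA : A.IsSymm)
    (x y : n → K) : x ⬝ᵥ A *ᵥ y = y ⬝ᵥ A *ᵥ x := by
  rw [dotProduct_mulVec, ← mulVec_transpose, hA.eq, dotProduct_comm]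

end Matrix

theorem exists_mulVec_eq_of_sum_eq_zero {n : Type*} [Fintype n] {Q : Matrix n n ℝ}
    (hQsymm : Q.IsSymm) (hker : ∀ v : n → ℝ, Q *ᵥ v = 0 → ∃ c : ℝ, v = fun _ => c)
    (ν : n → ℝ) (hν : ∑ i, ν i = 0) : ∃ x, Q *ᵥ x = ν := by
  refine Q.exists_mulVec_eq_of_forall_vecMul_eq_zero ν fun w hw => ?_
  rw [← mulVec_transpose, hQsymm.eq] at hw
  obtain ⟨c, rfl⟩ := hker w hw
  simp [dotProduct, ← Finset.mul_sum, hν]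

/-- **Lemma 5.1 (independence).** If `Q` is a real symmetric `n × n` matrix whose kernel is
exactly the span of the all-ones vector, and `L`, `L'` are generalized inverses of `Q`
(`Q * L * Q = Q` and `Q * L' * Q = Q`), then for all balanced vectors `ν₁, ν₂` one has
`ν₁ᵀ L ν₂ = ν₁ᵀ L' ν₂`, and this common value is symmetric in `ν₁, ν₂`. -/
theorem energy_pairing_independent_of_generalized_inverse
    {n : ℕ} (Q L L' : Matrix (Fin n) (Fin n) ℝ)
    (hQsymm : Q.IsSymm)
    (hker : ∀ v : Fin n → ℝ, Q.mulVec v = 0 ↔ ∃ c : ℝ, v = fun _ => c)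
    (hL : Q * L * Q = Q) (hL' : Q * L' * Q = Q)
    (ν₁ ν₂ : Fin n → ℝ) (h₁ : ∑ i, ν₁ i = 0) (h₂ : ∑ i, ν₂ i = 0) :
    ν₁ ⬝ᵥ L.mulVec ν₂ = ν₁ ⬝ᵥ L'.mulVec ν₂ ∧
    ν₁ ⬝ᵥ L.mulVec ν₂ = ν₂ ⬝ᵥ L.mulVec ν₁ := by
  obtain ⟨x₁, rfl⟩ := exists_mulVec_eq_of_sum_eq_zero hQsymm (fun v => (hker v).mp) ν₁ h₁
  obtain ⟨x₂, rfl⟩ := exists_mulVec_eq_of_sum_eq_zero hQsymm (fun v => (hker v).mp) ν₂ h₂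
  rw [mulVec_dotProduct_mulVec_mulVec, mulVec_dotProduct_mulVec_mulVec,
    mulVec_dotProduct_mulVec_mulVec, hQsymm.eq, hL, hL']
  exact ⟨rfl, hQsymm.dotProduct_mulVec_comm x₁ x₂⟩
end

section
/- Let B be an n×m real matrix and D an m×m diagonal matrix with positive diagonal entries, and set Q = B·D⁻¹·Bᵀ. Assume the kernel of Bᵀ (equivalently, of Q) is exactly the span of the all-ones vector 𝟙 ∈ ℝⁿ. Let L be any generalized inverse of Q. Then for every nonzero balanced vector ν ∈ ℝⁿ one has νᵀ·L·ν > 0; that is, the energy pairing (ν₁, ν₂) ↦ ν₁ᵀ·L·ν₂ is positive definite on the space of balanced vectors. (Paper: Lemma 5.1, positive definiteness of the energy pairing.) -/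
/-!
Since `Q = B D⁻¹ Bᵀ` is symmetric, its range is the orthogonal complement of its kernel, and
`Q w = 0 ↔ Bᵀ w = 0` because `D⁻¹` is positive definite. Hence the range of `Q` is exactly the
space of balanced vectors, so `ν = Q w` for some `w`, and `Q L Q = Q` gives
`νᵀ L ν = wᵀ Q w = (Bᵀ w)ᵀ D⁻¹ (Bᵀ w)`, which is positive because `Bᵀ w ≠ 0`.
-/

open Matrix
open scoped ComplexOrder

namespace Matrix

variable {ι κ 𝕜 : Type*} [Fintype ι] [Fintype κ] [RCLike 𝕜]

theorem IsHermitian.exists_mulVec_eq_of_forall_mulVec_eq_zero [DecidableEq ι]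
    {Q : Matrix ι ι 𝕜} (hQ : Q.IsHermitian) {v : ι → 𝕜}
    (hv : ∀ u, Q *ᵥ u = 0 → star u ⬝ᵥ v = 0) : ∃ w, Q *ᵥ w = v := by
  have hsymm := isSymmetric_toEuclideanLin_iff.mpr hQ
  have hrange : LinearMap.range Q.toEuclideanLin = (LinearMap.ker Q.toEuclideanLin)ᗮ := by
    rw [← hsymm.orthogonal_range, Submodule.orthogonal_orthogonal]
  have hmem : WithLp.toLp 2 v ∈ LinearMap.range Q.toEuclideanLin := by
    rw [hrange, Submodule.mem_orthogonal]
    intro u hu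
    rw [EuclideanSpace.inner_eq_star_dotProduct, dotProduct_comm]
    exact hv _ (by simpa [LinearMap.mem_ker, toLpLin_apply] using hu)
  obtain ⟨w, hw⟩ := hmem
  exact ⟨WithLp.ofLp w, by simpa [toLpLin_apply] using congrArg WithLp.ofLp hw⟩

theorem IsHermitian.star_mulVec_dotProduct_mulVec_mulVec_of_mul_mul_eq_self
    {Q L : Matrix ι ι 𝕜} (hQ : Q.IsHermitian) (hL : Q * L * Q = Q) (w : ι → 𝕜) :
    star (Q *ᵥ w) ⬝ᵥ L *ᵥ (Q *ᵥ w) = star w ⬝ᵥ Q *ᵥ w := by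
  rw [star_mulVec, hQ.eq, ← dotProduct_mulVec, mulVec_mulVec, mulVec_mulVec, hL]

theorem star_dotProduct_mul_mul_conjTranspose_mulVec (B : Matrix ι κ 𝕜) (A : Matrix κ κ 𝕜)
    (w : ι → 𝕜) :
    star w ⬝ᵥ (B * A * Bᴴ) *ᵥ w = star (Bᴴ *ᵥ w) ⬝ᵥ A *ᵥ (Bᴴ *ᵥ w) := by
  rw [star_mulVec, conjTranspose_conjTranspose, ← mulVec_mulVec, ← mulVec_mulVec,
    dotProduct_mulVec]

theorem PosDef.mul_mul_conjTranspose_mulVec_eq_zero_iff {A : Matrix κ κ 𝕜} (hA : A.PosDef)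
    (B : Matrix ι κ 𝕜) (w : ι → 𝕜) : (B * A * Bᴴ) *ᵥ w = 0 ↔ Bᴴ *ᵥ w = 0 := by
  refine ⟨fun h => ?_, fun h => by
    rw [← mulVec_mulVec, ← mulVec_mulVec, h, mulVec_zero, mulVec_zero]⟩
  by_contra hw
  have := hA.dotProduct_mulVec_pos hw
  rw [← star_dotProduct_mul_mul_conjTranspose_mulVec, h, dotProduct_zero] at this
  exact this.false

theorem PosDef.star_dotProduct_mul_mul_conjTranspose_mulVec_pos {A : Matrix κ κ 𝕜}
    (hA : A.PosDef) (B : Matrix ι κ 𝕜) {w : ι → 𝕜} (hw : (B * A * Bᴴ) *ᵥ w ≠ 0) :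
    0 < star w ⬝ᵥ (B * A * Bᴴ) *ᵥ w := by
  rw [star_dotProduct_mul_mul_conjTranspose_mulVec]
  exact hA.dotProduct_mulVec_pos (mt (hA.mul_mul_conjTranspose_mulVec_eq_zero_iff B w).mpr hw)

end Matrix

/-- **Lemma 5.1 (positive definiteness).** Let `Q = B D⁻¹ Bᵀ` with `D` a positive diagonal
matrix, and suppose the kernel of `Bᵀ` is exactly the span of the all-ones vector. Then for
any generalized inverse `L` of `Q` and any nonzero balanced vector `ν`, `νᵀ L ν > 0`. -/
theorem energy_pairing_positive_definite
    {n m : ℕ} (B : Matrix (Fin n) (Fin m) ℝ) (d : Fin m → ℝ)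
    (hd : ∀ i, 0 < d i)
    (hker : ∀ v : Fin n → ℝ, Bᵀ.mulVec v = 0 ↔ ∃ c : ℝ, v = fun _ => c)
    (L : Matrix (Fin n) (Fin n) ℝ)
    (hL : (B * (Matrix.diagonal d)⁻¹ * Bᵀ) * L * (B * (Matrix.diagonal d)⁻¹ * Bᵀ)
        = B * (Matrix.diagonal d)⁻¹ * Bᵀ)
    (ν : Fin n → ℝ) (hν : ν ≠ 0) (hbal : ∑ i, ν i = 0) :
    0 < ν ⬝ᵥ L.mulVec ν := by
  have hA : (diagonal d)⁻¹.PosDef := (PosDef.diagonal hd).inv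
  rw [← conjTranspose_eq_transpose_of_trivial] at hker hL
  have hQ : (B * (diagonal d)⁻¹ * Bᴴ).IsHermitian :=
    isHermitian_mul_mul_conjTranspose B hA.isHermitian
  obtain ⟨w, rfl⟩ : ∃ w, (B * (diagonal d)⁻¹ * Bᴴ) *ᵥ w = ν := by
    refine hQ.exists_mulVec_eq_of_forall_mulVec_eq_zero fun u hu => ?_
    obtain ⟨c, rfl⟩ := (hker u).mp ((hA.mul_mul_conjTranspose_mulVec_eq_zero_iff B u).mp hu)
    simp [dotProduct, ← Finset.mul_sum, hbal]
  have hpos := hA.star_dotProduct_mul_mul_conjTranspose_mulVec_pos B hν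
  rw [← hQ.star_mulVec_dotProduct_mulVec_mulVec_of_mul_mul_eq_self hL w, star_trivial] at hpos
  exact hpos
end

section
/- Let Q be a real symmetric n×n matrix all of whose row sums are zero, and let q ∈ {1,…,n} be an index such that the principal submatrix Q_q (delete row and column q) is invertible. Let L_q be the n×n matrix obtained from (Q_q)⁻¹ by inserting a zero row and a zero column at position q. Then Q·L_q = I + R_q, where I is the n×n identity matrix and R_q is the matrix whose q-th row has all entries equal to −1 and all other entries are 0; consequently Q·L_q·Q = Q, i.e. L_q is a generalized inverse of Q. (Paper: equation (4.1) and Remark 4.2(ii).) -/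
/-!
Because the column sums of `Q` vanish (row sums plus symmetry), so do those of `Q * L_q`;
hence row `q` of `Q * L_q` is minus the sum of the other rows. Those rows are computed by the
block `Q_q * (Q_q)⁻¹ = 1` away from column `q` and vanish in column `q`, which forces
`Q * L_q = I + R_q`. Finally `R_q * Q = 0`, as its only nonzero row is minus the column sums of `Q`.
-/

open Matrix

namespace Matrix

section ColumnSums

variable {ι κ ν α : Type*} [Fintype ι]

theorem sum_apply_eq_zero_of_isSymm [AddCommMonoid α] {Q : Matrix ι ι α} (hQ : Q.IsSymm)
    (hrow : ∀ i, ∑ j, Q i j = 0) (j : ι) : ∑ i, Q i j = 0 :=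
  (Finset.sum_congr rfl fun i _ => hQ.apply j i).trans (hrow j)

theorem sum_mul_apply_eq_zero [Fintype κ] [NonUnitalNonAssocSemiring α] {A : Matrix ι κ α}
    (hA : ∀ k, ∑ i, A i k = 0) (B : Matrix κ ν α) (j : ν) : ∑ i, (A * B) i j = 0 := by
  simp only [mul_apply]
  rw [Finset.sum_comm]
  simp [← Finset.sum_mul, hA]

theorem of_ite_neg_one_mul_eq_zero [DecidableEq ι] [NonAssocRing α] {Q : Matrix ι κ α}
    (hQ : ∀ k, ∑ i, Q i k = 0) (q : ι) :
    (of fun i (_ : ι) => if i = q then (-1 : α) else 0) * Q = 0 := by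
  ext i k
  by_cases hi : i = q <;> simp [mul_apply, hi, hQ k]

end ColumnSums

variable {n : ℕ} {α : Type*}

theorem apply_eq_neg_sum_succAbove [AddCommGroup α] {κ : Type*} {M : Matrix (Fin (n + 1)) κ α}
    {j : κ} (hj : ∑ i, M i j = 0) (q : Fin (n + 1)) :
    M q j = -∑ i, M (q.succAbove i) j := by
  rw [Fin.sum_univ_succAbove _ q] at hj
  exact eq_neg_of_add_eq_zero_left hj

theorem submatrix_succAbove_mul_of_row_eq_zero [NonUnitalNonAssocSemiring α] {m p : Type*}
    {Q : Matrix m (Fin (n + 1)) α} {L : Matrix (Fin (n + 1)) p α} {q : Fin (n + 1)}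
    (hL : ∀ j, L q j = 0) (e₁ : Fin n → m) (e₂ : Fin n → p) :
    (Q * L).submatrix e₁ e₂ = Q.submatrix e₁ q.succAbove * L.submatrix q.succAbove e₂ := by
  ext i j
  simp [mul_apply, Fin.sum_univ_succAbove _ q, hL]

theorem eq_one_add_of_sum_apply_eq_zero [NonAssocRing α] {M : Matrix (Fin (n + 1)) (Fin (n + 1)) α}
    {q : Fin (n + 1)} (hsum : ∀ j, ∑ i, M i j = 0) (hcol : ∀ i, M i q = 0)
    (hblock : M.submatrix q.succAbove q.succAbove = 1) :
    M = 1 + of fun i _ => if i = q then (-1 : α) else 0 := by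
  have hblock' (i j : Fin n) : M (q.succAbove i) (q.succAbove j) = if i = j then 1 else 0 :=
    congrFun (congrFun hblock i) j
  ext i j
  rcases Fin.eq_self_or_eq_succAbove q j with rfl | ⟨j, rfl⟩
  · rcases Fin.eq_self_or_eq_succAbove j i with rfl | ⟨i, rfl⟩ <;> simp [hcol]
  rcases Fin.eq_self_or_eq_succAbove q i with rfl | ⟨i, rfl⟩
  · simp [apply_eq_neg_sum_succAbove (hsum _) i, hblock', (i.succAbove_ne j).symm]
  · simp [hblock', one_apply]

end Matrix

/-- **Equation (4.1) and Remark 4.2(ii).** Let `Q` be a real symmetric matrix with zero row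
sums, let `q` be an index such that the principal submatrix `Q_q` (delete row and column `q`)
is invertible, and let `L_q` be obtained from `(Q_q)⁻¹` by inserting a zero row and a zero
column at position `q`. Then `Q * L_q = I + R_q`, where `R_q` has all entries `-1` in row `q`
and zeros elsewhere; consequently `Q * L_q * Q = Q`, i.e. `L_q` is a generalized inverse. -/
theorem padded_inverse_is_generalized_inverse
    {n : ℕ} (Q : Matrix (Fin (n + 1)) (Fin (n + 1)) ℝ)
    (hQsymm : Q.IsSymm)
    (hrow : ∀ i, ∑ j, Q i j = 0)
    (q : Fin (n + 1))
    (hinv : IsUnit (Q.submatrix q.succAbove q.succAbove).det)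
    (Lq : Matrix (Fin (n + 1)) (Fin (n + 1)) ℝ)
    (hpad : ∀ i j : Fin n,
      Lq (q.succAbove i) (q.succAbove j) = (Q.submatrix q.succAbove q.succAbove)⁻¹ i j)
    (hrow0 : ∀ j, Lq q j = 0) (hcol0 : ∀ i, Lq i q = 0) :
    Q * Lq = 1 + Matrix.of (fun i _ => if i = q then (-1 : ℝ) else 0) ∧
    Q * Lq * Q = Q := by
  have hcolsum := sum_apply_eq_zero_of_isSymm hQsymm hrow
  have hblock : (Q * Lq).submatrix q.succAbove q.succAbove = 1 := by
    have hLq : Lq.submatrix q.succAbove q.succAbove = (Q.submatrix q.succAbove q.succAbove)⁻¹ :=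
      Matrix.ext hpad
    rw [submatrix_succAbove_mul_of_row_eq_zero hrow0, hLq, mul_nonsing_inv _ hinv]
  have hQL : Q * Lq = 1 + Matrix.of (fun i _ => if i = q then (-1 : ℝ) else 0) :=
    eq_one_add_of_sum_apply_eq_zero (sum_mul_apply_eq_zero hcolsum Lq)
      (fun i => by simp [mul_apply, hcol0]) hblock
  refine ⟨hQL, ?_⟩
  rw [hQL, add_mul, one_mul, of_ite_neg_one_mul_eq_zero hcolsum, add_zero]
end

section
/- Let Q be a real symmetric n×n matrix all of whose row sums are zero, and let q, q' ∈ {1,…,n} be indices such that the principal submatrices Q_q and Q_{q'} are invertible. Let L_q and L_{q'} be the corresponding padded inverses. Then for all indices x, y, z, w ∈ {1,…,n}: (δ_x − δ_y)ᵀ·L_q·(δ_z − δ_w) = (δ_x − δ_y)ᵀ·L_{q'}·(δ_z − δ_w). In other words, the cross ratio ξ(x,y,z,w) is independent of the choice of the base point q. (Paper: Lemma 6.2(a).) -/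
/-!
If `L` is the padded inverse of `Q` at `p`, then `Q L v = v` for every `v` with zero sum: off `p`
this is `Q_p Q_p⁻¹ = 1`, and at `p` it follows because both sides have zero sum (`Q` is symmetric
with zero row sums). With `a = δ_x - δ_y`, `v = δ_z - δ_w` and the symmetry of `Q` and `L_{q'}`,
`aᵀ L_q v = (Q L_{q'} a)ᵀ L_q v = (L_{q'} a)ᵀ Q L_q v = (L_{q'} a)ᵀ v = aᵀ L_{q'} v`.
-/

open Matrix

theorem Fin.eq_of_comp_succAbove_eq_of_sum_eq {R : Type*} [AddCommGroup R] {n : ℕ}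
    {u v : Fin (n + 1) → R} (p : Fin (n + 1))
    (h : u ∘ p.succAbove = v ∘ p.succAbove) (hsum : ∑ i, u i = ∑ i, v i) : u = v := by
  rw [Fin.sum_univ_succAbove _ p, Fin.sum_univ_succAbove _ p] at hsum
  have hp : u p = v p := by
    have h' : ∀ i, u (p.succAbove i) = v (p.succAbove i) := congrFun h
    simp only [h'] at hsum
    exact add_right_cancel hsum
  funext a
  induction a using Fin.succAboveCases p with
  | x => exact hp
  | p i => exact congrFun h i

namespace Matrix

variable {R : Type*} [CommRing R]

theorem IsSymm.mulVec_dotProduct {ι : Type*} [Fintype ι] {M : Matrix ι ι R} (hM : M.IsSymm)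
    (u w : ι → R) : (M *ᵥ u) ⬝ᵥ w = u ⬝ᵥ (M *ᵥ w) := by
  rw [dotProduct_mulVec, ← vecMul_transpose, hM.eq]

theorem IsSymm.sum_mulVec_eq_zero {ι : Type*} [Fintype ι] {M : Matrix ι ι R} (hM : M.IsSymm)
    (hrow : ∀ i, ∑ j, M i j = 0) (u : ι → R) : ∑ i, (M *ᵥ u) i = 0 := by
  have hM1 : M *ᵥ 1 = 0 := funext fun i => by simpa [mulVec, dotProduct] using hrow i
  rw [← dotProduct_one, hM.mulVec_dotProduct, hM1, dotProduct_zero]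

variable {n : ℕ}

theorem mulVec_comp_succAbove_of_apply_eq_zero (M : Matrix (Fin (n + 1)) (Fin (n + 1)) R)
    {p : Fin (n + 1)} {u : Fin (n + 1) → R} (hu : u p = 0) :
    (M *ᵥ u) ∘ p.succAbove = M.submatrix p.succAbove p.succAbove *ᵥ (u ∘ p.succAbove) := by
  funext k
  simp [mulVec, dotProduct, Fin.sum_univ_succAbove _ p, hu]

structure IsPaddedInverse (Q L : Matrix (Fin (n + 1)) (Fin (n + 1)) R) (p : Fin (n + 1)) :
    Prop where
  submatrix_eq : L.submatrix p.succAbove p.succAbove = (Q.submatrix p.succAbove p.succAbove)⁻¹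
  row_eq_zero : ∀ j, L p j = 0
  col_eq_zero : ∀ i, L i p = 0

namespace IsPaddedInverse

variable {Q L : Matrix (Fin (n + 1)) (Fin (n + 1)) R} {p : Fin (n + 1)}

theorem isSymm (hL : IsPaddedInverse Q L p) (hQ : Q.IsSymm) : L.IsSymm := by
  have hA : (L.submatrix p.succAbove p.succAbove).IsSymm := by
    rw [hL.submatrix_eq]
    exact (hQ.submatrix _).inv
  ext a b
  induction a using Fin.succAboveCases p with
  | x => rw [transpose_apply, hL.row_eq_zero, hL.col_eq_zero]
  | p i =>
    induction b using Fin.succAboveCases p with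
    | x => rw [transpose_apply, hL.row_eq_zero, hL.col_eq_zero]
    | p j => exact hA.apply i j

theorem mulVec_apply_self (hL : IsPaddedInverse Q L p) (v : Fin (n + 1) → R) :
    (L *ᵥ v) p = 0 := by
  simp [mulVec, dotProduct, hL.row_eq_zero]

theorem mulVec_comp_succAbove (hL : IsPaddedInverse Q L p) (v : Fin (n + 1) → R) :
    (L *ᵥ v) ∘ p.succAbove = (Q.submatrix p.succAbove p.succAbove)⁻¹ *ᵥ (v ∘ p.succAbove) := by
  rw [← hL.submatrix_eq]
  funext k
  simp [mulVec, dotProduct, Fin.sum_univ_succAbove _ p, hL.col_eq_zero]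

theorem mulVec_mulVec_of_sum_eq_zero (hL : IsPaddedInverse Q L p) (hQ : Q.IsSymm)
    (hrow : ∀ i, ∑ j, Q i j = 0) (hinv : IsUnit (Q.submatrix p.succAbove p.succAbove).det)
    {v : Fin (n + 1) → R} (hv : ∑ i, v i = 0) : Q *ᵥ (L *ᵥ v) = v := by
  refine Fin.eq_of_comp_succAbove_eq_of_sum_eq p ?_ (by rw [hQ.sum_mulVec_eq_zero hrow, hv])
  rw [mulVec_comp_succAbove_of_apply_eq_zero Q (hL.mulVec_apply_self v), hL.mulVec_comp_succAbove,
    mulVec_mulVec, mul_nonsing_inv _ hinv, one_mulVec]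

end IsPaddedInverse

end Matrix

/-- **Lemma 6.2(a).** Let `Q` be a real symmetric matrix with zero row sums, and `q`, `q'`
two indices whose principal submatrices `Q_q`, `Q_{q'}` are invertible, with padded
inverses `L_q`, `L_{q'}`. Then for all indices `x, y, z, w` the cross ratio
`(δ_x - δ_y)ᵀ L_q (δ_z - δ_w)` does not depend on the base point `q`. -/
theorem cross_ratio_independent_of_base_point
    {n : ℕ} (Q : Matrix (Fin (n + 1)) (Fin (n + 1)) ℝ)
    (hQsymm : Q.IsSymm)
    (hrow : ∀ i, ∑ j, Q i j = 0)
    (q q' : Fin (n + 1))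
    (hinv : IsUnit (Q.submatrix q.succAbove q.succAbove).det)
    (hinv' : IsUnit (Q.submatrix q'.succAbove q'.succAbove).det)
    (Lq : Matrix (Fin (n + 1)) (Fin (n + 1)) ℝ)
    (hpad : ∀ i j : Fin n,
      Lq (q.succAbove i) (q.succAbove j) = (Q.submatrix q.succAbove q.succAbove)⁻¹ i j)
    (hrow0 : ∀ j, Lq q j = 0) (hcol0 : ∀ i, Lq i q = 0)
    (Lq' : Matrix (Fin (n + 1)) (Fin (n + 1)) ℝ)
    (hpad' : ∀ i j : Fin n,
      Lq' (q'.succAbove i) (q'.succAbove j) = (Q.submatrix q'.succAbove q'.succAbove)⁻¹ i j)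
    (hrow0' : ∀ j, Lq' q' j = 0) (hcol0' : ∀ i, Lq' i q' = 0)
    (x y z w : Fin (n + 1)) :
    (Pi.single x 1 - Pi.single y 1) ⬝ᵥ Lq.mulVec (Pi.single z 1 - Pi.single w 1) =
    (Pi.single x 1 - Pi.single y 1) ⬝ᵥ Lq'.mulVec (Pi.single z 1 - Pi.single w 1) := by
  have hL : IsPaddedInverse Q Lq q := ⟨Matrix.ext hpad, hrow0, hcol0⟩
  have hL' : IsPaddedInverse Q Lq' q' := ⟨Matrix.ext hpad', hrow0', hcol0'⟩
  set a : Fin (n + 1) → ℝ := Pi.single x 1 - Pi.single y 1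
  set v : Fin (n + 1) → ℝ := Pi.single z 1 - Pi.single w 1
  have ha : Q *ᵥ (Lq' *ᵥ a) = a :=
    hL'.mulVec_mulVec_of_sum_eq_zero hQsymm hrow hinv' (by simp [a, Finset.sum_sub_distrib])
  have hv : Q *ᵥ (Lq *ᵥ v) = v :=
    hL.mulVec_mulVec_of_sum_eq_zero hQsymm hrow hinv (by simp [v, Finset.sum_sub_distrib])
  calc a ⬝ᵥ Lq *ᵥ v = (Q *ᵥ (Lq' *ᵥ a)) ⬝ᵥ (Lq *ᵥ v) := by rw [ha]
    _ = (Lq' *ᵥ a) ⬝ᵥ v := by rw [hQsymm.mulVec_dotProduct, hv]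
    _ = a ⬝ᵥ Lq' *ᵥ v := (hL'.isSymm hQsymm).mulVec_dotProduct a v
end

section
/- Let Q be a real symmetric n×n matrix (n ≥ 2) with nonpositive off-diagonal entries, zero row sums, and kernel exactly the span of the all-ones vector 𝟙 ∈ ℝⁿ. Let L be any generalized inverse of Q, and for indices x, y, z ∈ {1,…,n} define j_z(x,y) := (δ_x − δ_z)ᵀ·L·(δ_y − δ_z). Then 0 ≤ j_z(x,y) ≤ j_z(x,x) for all x, y, z. (Paper: Remark 3.2(iii), nonnegativity and boundedness of the j-function.) -/
/-!
Since `Q` is symmetric with kernel spanned by `𝟙`, its range is `𝟙ᗮ`, so `Q a = δ_x - δ_z` has a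
solution `a`, and `QLQ = Q` turns `j_z(x, y)` into `a_y - a_z`. The potential `a` is harmonic away
from `x` and `z`, so by the maximum principle it is largest at `x` and smallest at `z`.
-/

open Matrix

theorem Matrix.IsSymm.exists_mulVec_eq_iff {ι : Type*} [Fintype ι] [DecidableEq ι]
    {A : Matrix ι ι ℝ} (hA : A.IsSymm) (w : ι → ℝ) :
    (∃ a, A *ᵥ a = w) ↔ ∀ v, A *ᵥ v = 0 → v ⬝ᵥ w = 0 := by
  constructor
  · rintro ⟨a, rfl⟩ v hv
    rw [dotProduct_mulVec, ← hA.eq, vecMul_transpose, hv, zero_dotProduct]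
  · intro hw
    have hT : (toEuclideanLin A).IsSymmetric :=
      isSymmetric_toEuclideanLin_iff.mpr (isHermitian_iff_isSymm.mpr hA)
    have hrange : LinearMap.range (toEuclideanLin A) = (LinearMap.ker (toEuclideanLin A))ᗮ := by
      rw [← hT.orthogonal_range, Submodule.orthogonal_orthogonal]
    have hmem : WithLp.toLp 2 w ∈ LinearMap.range (toEuclideanLin A) := by
      rw [hrange, Submodule.mem_orthogonal]
      intro u hu
      rw [EuclideanSpace.inner_eq_star_dotProduct, star_trivial, dotProduct_comm]
      exact hw _ (congrArg WithLp.ofLp hu)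
    obtain ⟨a, ha⟩ := hmem
    exact ⟨WithLp.ofLp a, congrArg WithLp.ofLp ha⟩

theorem Matrix.IsSymm.mulVec_dotProduct_mulVec_mulVec {ι R : Type*} [Fintype ι] [CommSemiring R]
    {Q L : Matrix ι ι R} (hQ : Q.IsSymm) (hL : Q * L * Q = Q) (a b : ι → R) :
    Q *ᵥ a ⬝ᵥ L *ᵥ (Q *ᵥ b) = a ⬝ᵥ Q *ᵥ b := by
  rw [← vecMul_transpose, hQ.eq, ← dotProduct_mulVec, mulVec_mulVec, mulVec_mulVec, hL]

section MaximumPrinciple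

variable {ι 𝕜 : Type*} [Fintype ι] [CommRing 𝕜] {Q : Matrix ι ι 𝕜}

theorem Matrix.sum_mul_sub_eq_mulVec (hrow : ∀ i, ∑ j, Q i j = 0) (a : ι → 𝕜) (c : 𝕜) (i : ι) :
    ∑ j, Q i j * (a j - c) = (Q *ᵥ a) i := by
  simp only [mul_sub, Finset.sum_sub_distrib, ← Finset.sum_mul, hrow, zero_mul, sub_zero]
  rfl

theorem Matrix.apply_eq_zero_of_mulVec_nonpos_of_forall_le [LinearOrder 𝕜] [IsStrictOrderedRing 𝕜]
    (hoff : ∀ i j, i ≠ j → Q i j ≤ 0)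
    (hrow : ∀ i, ∑ j, Q i j = 0) {a : ι → 𝕜} {i : ι} (hmax : ∀ j, a j ≤ a i)
    (hQa : (Q *ᵥ a) i ≤ 0) {j : ι} (hj : a j < a i) : Q i j = 0 := by
  have hterm : ∀ k ∈ Finset.univ, 0 ≤ Q i k * (a k - a i) := by
    intro k _
    rcases eq_or_ne i k with rfl | hik
    · simp
    · exact mul_nonneg_of_nonpos_of_nonpos (hoff i k hik) (sub_nonpos.mpr (hmax k))
  have hsum : ∑ k, Q i k * (a k - a i) = 0 :=
    le_antisymm (sum_mul_sub_eq_mulVec hrow a _ i ▸ hQa) (Finset.sum_nonneg hterm)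
  have := (Finset.sum_eq_zero_iff_of_nonneg hterm).mp hsum j (Finset.mem_univ j)
  exact (mul_eq_zero.mp this).resolve_right (sub_ne_zero.mpr hj.ne)

theorem Matrix.mulVec_indicator_eq_zero [DecidableEq ι] (hQ : Q.IsSymm)
    (hrow : ∀ i, ∑ j, Q i j = 0) {S : Finset ι} (hS : ∀ i ∈ S, ∀ j ∉ S, Q i j = 0) :
    Q *ᵥ (fun i => if i ∈ S then 1 else 0) = 0 := by
  ext i
  simp only [mulVec, dotProduct, mul_ite, mul_one, mul_zero, Finset.sum_ite_mem,
    Finset.univ_inter, Pi.zero_apply]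
  by_cases hi : i ∈ S
  · rw [← hrow i, ← Finset.sum_add_sum_compl S, left_eq_add]
    exact Finset.sum_eq_zero fun j hj => hS i hi j (Finset.mem_compl.mp hj)
  · exact Finset.sum_eq_zero fun j hj => hQ.apply i j ▸ hS j hj i hi

theorem Matrix.apply_le_apply_of_mulVec_nonpos [LinearOrder 𝕜] [IsStrictOrderedRing 𝕜]
    (hQ : Q.IsSymm) (hoff : ∀ i j, i ≠ j → Q i j ≤ 0) (hrow : ∀ i, ∑ j, Q i j = 0)
    (hconn : ∀ v, Q *ᵥ v = 0 → ∃ c : 𝕜, v = fun _ => c) {a : ι → 𝕜} {x : ι}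
    (hsub : ∀ i ≠ x, (Q *ᵥ a) i ≤ 0) (y : ι) : a y ≤ a x := by
  classical
  have : Nonempty ι := ⟨x⟩
  obtain ⟨m, hm⟩ := Finite.exists_max a
  set S := Finset.univ.filter fun i => a i = a m
  -- Otherwise no edge leaves the argmax set `S`, so its indicator is a nonconstant kernel vector.
  by_contra! hxy
  have hx : a x < a m := hxy.trans_le (hm y)
  have hS : ∀ i ∈ S, ∀ j ∉ S, Q i j = 0 := by
    intro i hi j hj
    simp only [S, Finset.mem_filter, Finset.mem_univ, true_and] at hi hj
    exact apply_eq_zero_of_mulVec_nonpos_of_forall_le hoff hrow (hi ▸ hm)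
      (hsub i fun hix => hx.ne (hix ▸ hi)) (hi ▸ lt_of_le_of_ne (hm j) hj)
  obtain ⟨c, hc⟩ := hconn _ (mulVec_indicator_eq_zero hQ hrow hS)
  have hxS : x ∉ S := by simp [S, hx.ne]
  have hmS : m ∈ S := by simp [S]
  have := congrFun hc m ▸ congrFun hc x
  simp [hxS, hmS] at this

theorem Matrix.apply_le_apply_of_mulVec_nonneg [LinearOrder 𝕜] [IsStrictOrderedRing 𝕜]
    (hQ : Q.IsSymm) (hoff : ∀ i j, i ≠ j → Q i j ≤ 0) (hrow : ∀ i, ∑ j, Q i j = 0)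
    (hconn : ∀ v, Q *ᵥ v = 0 → ∃ c : 𝕜, v = fun _ => c) {a : ι → 𝕜} {x : ι}
    (hsuper : ∀ i ≠ x, 0 ≤ (Q *ᵥ a) i) (y : ι) : a x ≤ a y := by
  have := apply_le_apply_of_mulVec_nonpos hQ hoff hrow hconn (a := -a)
    (fun i hi => by simpa [mulVec_neg] using hsuper i hi) y
  simpa using this

end MaximumPrinciple

theorem j_function_nonneg_and_bounded_general
    {n : ℕ} (Q L : Matrix (Fin n) (Fin n) ℝ)
    (hQsymm : Q.IsSymm)
    (hoff : ∀ i j, i ≠ j → Q i j ≤ 0)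
    (hrow : ∀ i, ∑ j, Q i j = 0)
    (hker : ∀ v : Fin n → ℝ, Q.mulVec v = 0 ↔ ∃ c : ℝ, v = fun _ => c)
    (hL : Q * L * Q = Q) :
    let jfun : Fin n → Fin n → Fin n → ℝ := fun z x y =>
      (Pi.single x 1 - Pi.single z 1) ⬝ᵥ L.mulVec (Pi.single y 1 - Pi.single z 1)
    ∀ x y z : Fin n, 0 ≤ jfun z x y ∧ jfun z x y ≤ jfun z x x := by
  intro jfun x y z
  have hsolve : ∀ p q, ∃ a, Q *ᵥ a = Pi.single p 1 - Pi.single q 1 := fun p q =>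
    (hQsymm.exists_mulVec_eq_iff _).mpr fun v hv => by
      obtain ⟨c, rfl⟩ := (hker v).mp hv
      simp [dotProduct_sub]
  obtain ⟨a, ha⟩ := hsolve x z
  have hj : ∀ y', jfun z x y' = a y' - a z := fun y' => by
    obtain ⟨b, hb⟩ := hsolve y' z
    change _ ⬝ᵥ _ = _
    rw [← ha, ← hb, hQsymm.mulVec_dotProduct_mulVec_mulVec hL, hb]
    simp [dotProduct_sub]
  have hconn v := (hker v).mp
  have hδ (p : Fin n) : 0 ≤ (Pi.single p 1 : Fin n → ℝ) := Pi.single_nonneg.mpr zero_le_one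
  have hmax := apply_le_apply_of_mulVec_nonpos hQsymm hoff hrow hconn (a := a) (x := x)
    (fun i hi => by simpa [ha, Pi.single_eq_of_ne hi] using hδ z i) y
  have hmin := apply_le_apply_of_mulVec_nonneg hQsymm hoff hrow hconn (a := a) (x := z)
    (fun i hi => by simpa [ha, Pi.single_eq_of_ne hi] using hδ x i) y
  rw [hj, hj]
  constructor <;> linarith

/-- **Remark 3.2(iii).** Let `Q` be a real symmetric `n × n` matrix (`n ≥ 2`) with nonpositive
off-diagonal entries, zero row sums, and kernel exactly the span of the all-ones vector.
Let `L` be any generalized inverse of `Q`, and for indices `x, y, z` define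
`j_z(x,y) := (δ_x - δ_z)ᵀ L (δ_y - δ_z)`. Then `0 ≤ j_z(x,y) ≤ j_z(x,x)` for all `x, y, z`. -/
theorem j_function_nonneg_and_bounded
    {n : ℕ} (hn : 2 ≤ n) (Q L : Matrix (Fin n) (Fin n) ℝ)
    (hQsymm : Q.IsSymm)
    (hoff : ∀ i j, i ≠ j → Q i j ≤ 0)
    (hrow : ∀ i, ∑ j, Q i j = 0)
    (hker : ∀ v : Fin n → ℝ, Q.mulVec v = 0 ↔ ∃ c : ℝ, v = fun _ => c)
    (hL : Q * L * Q = Q) :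
    let jfun : Fin n → Fin n → Fin n → ℝ := fun z x y =>
      (Pi.single x 1 - Pi.single z 1) ⬝ᵥ L.mulVec (Pi.single y 1 - Pi.single z 1)
    ∀ x y z : Fin n, 0 ≤ jfun z x y ∧ jfun z x y ≤ jfun z x x :=
  j_function_nonneg_and_bounded_general Q L hQsymm hoff hrow hker hL
end

section
/- Let B be an n×m real matrix and D an m×m diagonal matrix with positive diagonal entries, and set Q = B·D⁻¹·Bᵀ. Let L and L' be any two generalized inverses of Q. Then Bᵀ·L·B = Bᵀ·L'·B, and this common matrix Ξ := Bᵀ·L·B is symmetric. (Paper: well-definedness of the matrix of cross ratios Ξ, equation (7.1).) -/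
open Matrix

/-!
`Q = B D⁻¹ Bᵀ` is symmetric and has the same kernel as `Bᵀ`, because `D⁻¹ = S²` with `S`
the positive diagonal square root, so `Q = (B S)(B S)ᵀ`. The kernel condition says that
`Bᵀ L Q = Bᵀ` for every generalized inverse `L`, and transposing (`Lᵀ` is again a generalized
inverse of the symmetric `Q`) gives `Q L B = B`. Hence for two generalized inverses
`Bᵀ L B = Bᵀ L Q L' B = Bᵀ L' B`, and applied to `L' = Lᵀ` this is the symmetry of
`Bᵀ L B`.
-/

namespace Matrix

variable {R : Type*} [CommRing R] {n m : Type*}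

theorem isSymm_mul_mul_transpose [Fintype m] {A : Matrix m m R} (hA : A.IsSymm)
    (B : Matrix n m R) :
    (B * A * Bᵀ).IsSymm := by
  rw [IsSymm, transpose_mul, transpose_mul, transpose_transpose, hA.eq, Matrix.mul_assoc]

variable [Fintype n]

def IsGeneralizedInverse (Q L : Matrix n n R) : Prop :=
  Q * L * Q = Q

section GeneralizedInverse

variable {Q L L' : Matrix n n R} {B : Matrix n m R}

theorem IsGeneralizedInverse.transpose (hQ : Q.IsSymm) (hL : IsGeneralizedInverse Q L) :
    IsGeneralizedInverse Q Lᵀ := by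
  have := congrArg Matrix.transpose hL
  rwa [transpose_mul, transpose_mul, hQ.eq, ← Matrix.mul_assoc] at this

theorem IsGeneralizedInverse.transpose_mul_mul_eq [DecidableEq n]
    (hker : ∀ Y : Matrix n n R, Q * Y = 0 → Bᵀ * Y = 0) (hL : IsGeneralizedInverse Q L) :
    Bᵀ * L * Q = Bᵀ := by
  have hQ : Q * (L * Q - 1) = 0 := by
    rw [Matrix.mul_sub, Matrix.mul_one, ← Matrix.mul_assoc, hL, sub_self]
  simpa only [Matrix.mul_sub, Matrix.mul_one, sub_eq_zero, Matrix.mul_assoc] using hker _ hQ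

theorem IsGeneralizedInverse.mul_mul_eq [DecidableEq n] (hQ : Q.IsSymm)
    (hker : ∀ Y : Matrix n n R, Q * Y = 0 → Bᵀ * Y = 0) (hL : IsGeneralizedInverse Q L) :
    Q * L * B = B := by
  have := congrArg Matrix.transpose ((hL.transpose hQ).transpose_mul_mul_eq hker)
  rwa [transpose_mul, transpose_mul, hQ.eq, transpose_transpose, transpose_transpose,
    ← Matrix.mul_assoc] at this

theorem IsGeneralizedInverse.transpose_mul_mul_eq_of_isGeneralizedInverse [DecidableEq n]
    (hQ : Q.IsSymm)
    (hker : ∀ Y : Matrix n n R, Q * Y = 0 → Bᵀ * Y = 0) (hL : IsGeneralizedInverse Q L)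
    (hL' : IsGeneralizedInverse Q L') :
    Bᵀ * L * B = Bᵀ * L' * B :=
  calc Bᵀ * L * B = Bᵀ * L * (Q * L' * B) := by rw [hL'.mul_mul_eq hQ hker]
    _ = Bᵀ * L * Q * L' * B := by simp only [Matrix.mul_assoc]
    _ = Bᵀ * L' * B := by rw [hL.transpose_mul_mul_eq hker]

theorem IsGeneralizedInverse.isSymm_transpose_mul_mul [DecidableEq n] (hQ : Q.IsSymm)
    (hker : ∀ Y : Matrix n n R, Q * Y = 0 → Bᵀ * Y = 0) (hL : IsGeneralizedInverse Q L) :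
    (Bᵀ * L * B).IsSymm := by
  rw [IsSymm, transpose_mul, transpose_mul, transpose_transpose, ← Matrix.mul_assoc]
  exact (hL.transpose_mul_mul_eq_of_isGeneralizedInverse hQ hker (hL.transpose hQ)).symm

end GeneralizedInverse

theorem transpose_mul_eq_zero_of_mul_diagonal_mul_transpose_mul_eq_zero [Fintype m]
    [DecidableEq m] {k : Type*} {B : Matrix n m ℝ} {d : m → ℝ} (hd : ∀ i, 0 < d i)
    {Y : Matrix n k ℝ}
    (hY : B * diagonal d * Bᵀ * Y = 0) :
    Bᵀ * Y = 0 := by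
  set s : m → ℝ := fun i ↦ √(d i)
  have hsq : diagonal d = diagonal s * diagonal s := by
    rw [diagonal_mul_diagonal]
    exact congrArg diagonal (funext fun i ↦ (Real.mul_self_sqrt (hd i).le).symm)
  have hfactor : B * diagonal d * Bᵀ = (B * diagonal s)ᵀᴴ * (B * diagonal s)ᵀ := by
    rw [conjTranspose_eq_transpose_of_trivial, transpose_transpose, transpose_mul,
      diagonal_transpose, hsq, Matrix.mul_assoc, Matrix.mul_assoc, Matrix.mul_assoc]
  rw [hfactor, conjTranspose_mul_self_mul_eq_zero, transpose_mul, diagonal_transpose,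
    Matrix.mul_assoc] at hY
  ext i j
  have hij := congrFun (congrFun hY i) j
  rw [diagonal_mul, zero_apply] at hij
  exact (mul_eq_zero.mp hij).resolve_left (Real.sqrt_pos.mpr (hd i)).ne'

end Matrix

/-- **Well-definedness of the matrix of cross ratios Ξ (equation (7.1)).** Let
`Q = B D⁻¹ Bᵀ` with `D` a positive diagonal matrix, and let `L`, `L'` be any two
generalized inverses of `Q`. Then `Bᵀ L B = Bᵀ L' B`, and this common matrix
`Ξ := Bᵀ L B` is symmetric. -/
theorem cross_ratio_matrix_well_defined
    {n m : ℕ} (B : Matrix (Fin n) (Fin m) ℝ) (d : Fin m → ℝ)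
    (hd : ∀ i, 0 < d i)
    (L L' : Matrix (Fin n) (Fin n) ℝ)
    (hL : (B * (Matrix.diagonal d)⁻¹ * Bᵀ) * L * (B * (Matrix.diagonal d)⁻¹ * Bᵀ)
        = B * (Matrix.diagonal d)⁻¹ * Bᵀ)
    (hL' : (B * (Matrix.diagonal d)⁻¹ * Bᵀ) * L' * (B * (Matrix.diagonal d)⁻¹ * Bᵀ)
        = B * (Matrix.diagonal d)⁻¹ * Bᵀ) :
    Bᵀ * L * B = Bᵀ * L' * B ∧ (Bᵀ * L * B).IsSymm := by
  have hinv : (diagonal d)⁻¹ = diagonal d⁻¹ := by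
    refine inv_eq_left_inv ?_
    rw [diagonal_mul_diagonal, ← diagonal_one]
    exact congrArg diagonal (funext fun i ↦ inv_mul_cancel₀ (hd i).ne')
  rw [hinv] at hL hL'
  have hQ := isSymm_mul_mul_transpose (isSymm_diagonal d⁻¹) B
  have hker (Y : Matrix (Fin n) (Fin n) ℝ) (hY : B * diagonal d⁻¹ * Bᵀ * Y = 0) :
      Bᵀ * Y = 0 :=
    transpose_mul_eq_zero_of_mul_diagonal_mul_transpose_mul_eq_zero
      (fun i ↦ inv_pos.mpr (hd i)) hY
  exact ⟨IsGeneralizedInverse.transpose_mul_mul_eq_of_isGeneralizedInverse hQ hker hL hL',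
    IsGeneralizedInverse.isSymm_transpose_mul_mul hQ hker hL⟩
end

section
/- Let B be an n×m real matrix and D an m×m diagonal matrix with positive diagonal entries, set Q = B·D⁻¹·Bᵀ, and equip ℝᵐ with the inner product ⟨x,y⟩_D := xᵀ·D·y. Let L be any generalized inverse of Q and put P := D⁻¹·Bᵀ·L·B. Then for every x ∈ ℝᵐ: (i) B·(P·x) = B·x, so x − P·x lies in the kernel of B; and (ii) P·x is ⟨·,·⟩_D-orthogonal to every vector in the kernel of B. Consequently P is the matrix of the orthogonal projection of (ℝᵐ, ⟨·,·⟩_D) onto the orthogonal complement of ker(B), and I − P is the matrix of the orthogonal projection onto ker(B). (Paper: Proposition 7.4 / Theorem B.) -/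
/-!
Write `Q = B D⁻¹ Bᵀ`. Because `D⁻¹` is positive definite, `N D⁻¹ Nᵀ = 0` forces `N = 0`;
applied to `N = (Q L - 1) B` this upgrades `Q L Q = Q` to `Q L B = B`, which is `B P = B`,
i.e. (i). For (ii), `D P = Bᵀ L B`, so `⟨P x, y⟩_D = (L B x) ⬝ B y` vanishes on `ker B`.
-/

open Matrix

namespace Matrix

variable {m n R : Type*} [Fintype m] [Fintype n] [Ring R] [PartialOrder R] [StarRing R]

theorem PosDef.eq_zero_of_mul_mul_conjTranspose_eq_zero {W : Matrix n n R} (hW : W.PosDef)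
    {N : Matrix m n R} (h : N * W * Nᴴ = 0) : N = 0 := by
  classical
  rw [← conjTranspose_eq_zero]
  refine ext_of_mulVec_single fun i => ?_
  rw [zero_mulVec]
  by_contra hne
  have hpos := hW.dotProduct_mulVec_pos hne
  rw [star_mulVec, conjTranspose_conjTranspose, ← dotProduct_mulVec, mulVec_mulVec,
    mulVec_mulVec, h] at hpos
  simp at hpos

theorem PosDef.mul_mul_conjTranspose_mul_mul_eq_self [DecidableEq m] {W : Matrix n n R}
    (hW : W.PosDef) {B : Matrix m n R} {L : Matrix m m R}
    (hL : B * W * Bᴴ * L * (B * W * Bᴴ) = B * W * Bᴴ) : B * W * Bᴴ * L * B = B := by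
  set M := B * W * Bᴴ * L - 1
  have hMQ : M * (B * W * Bᴴ) = 0 := by simp [M, sub_mul, hL]
  have hMB : M * B * W * (M * B)ᴴ = 0 := by
    rw [conjTranspose_mul, ← Matrix.mul_assoc, Matrix.mul_assoc M, Matrix.mul_assoc M, hMQ,
      Matrix.zero_mul]
  have := hW.eq_zero_of_mul_mul_conjTranspose_eq_zero hMB
  simp only [M, Matrix.sub_mul, Matrix.one_mul] at this
  exact sub_eq_zero.mp this

end Matrix

/-- **Proposition 7.4 / Theorem B.** Let `Q = B D⁻¹ Bᵀ` with `D` a positive diagonal matrix,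
let `L` be any generalized inverse of `Q`, and put `P := D⁻¹ Bᵀ L B`. Then for every
`x ∈ ℝᵐ`: (i) `B (P x) = B x`, so `x - P x ∈ ker B`; and (ii) `P x` is orthogonal, for the
inner product `⟨u, v⟩_D = uᵀ D v`, to every vector in `ker B`. Hence `P` is the matrix of
the orthogonal projection of `(ℝᵐ, ⟨·,·⟩_D)` onto the orthogonal complement of `ker B`,
and `I - P` is the matrix of the orthogonal projection onto `ker B`. -/
theorem projection_via_cross_ratios
    {n m : ℕ} (B : Matrix (Fin n) (Fin m) ℝ) (d : Fin m → ℝ)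
    (hd : ∀ i, 0 < d i)
    (L : Matrix (Fin n) (Fin n) ℝ)
    (hL : (B * (Matrix.diagonal d)⁻¹ * Bᵀ) * L * (B * (Matrix.diagonal d)⁻¹ * Bᵀ)
        = B * (Matrix.diagonal d)⁻¹ * Bᵀ) :
    let P := (Matrix.diagonal d)⁻¹ * Bᵀ * L * B
    ∀ x : Fin m → ℝ,
      B.mulVec (P.mulVec x) = B.mulVec x ∧
      ∀ y : Fin m → ℝ, B.mulVec y = 0 →
        P.mulVec x ⬝ᵥ (Matrix.diagonal d).mulVec y = 0 := by
  intro P x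
  have hD : (diagonal d).PosDef := posDef_diagonal_iff.mpr hd
  have hQLB : B * (diagonal d)⁻¹ * Bᵀ * L * B = B := by
    simpa only [conjTranspose_eq_transpose_of_trivial] using
      hD.inv.mul_mul_conjTranspose_mul_mul_eq_self
        (by simpa only [conjTranspose_eq_transpose_of_trivial] using hL)
  have hBP : B * P = B := by simpa only [P, Matrix.mul_assoc] using hQLB
  have hDP : diagonal d * P = Bᵀ * L * B := by
    simp only [P, Matrix.mul_assoc,
      mul_nonsing_inv_cancel_left _ _ ((isUnit_iff_isUnit_det _).mp hD.isUnit)]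
  refine ⟨by rw [mulVec_mulVec, hBP], fun y hy => ?_⟩
  calc P *ᵥ x ⬝ᵥ diagonal d *ᵥ y = (diagonal d * P) *ᵥ x ⬝ᵥ y := by
        rw [dotProduct_mulVec, ← mulVec_transpose, diagonal_transpose, mulVec_mulVec]
    _ = (L * B) *ᵥ x ⬝ᵥ B *ᵥ y := by
        rw [hDP, Matrix.mul_assoc, ← mulVec_mulVec, mulVec_transpose, dotProduct_mulVec]
    _ = 0 := by rw [hy, dotProduct_zero]
end

section
/- Let B be an n×m real matrix and D an m×m diagonal matrix with positive diagonal entries, set Q = B·D⁻¹·Bᵀ, let L be any generalized inverse of Q, and put P := D⁻¹·Bᵀ·L·B. Then P is idempotent (P·P = P) and D·P is a symmetric matrix (equivalently, P is self-adjoint with respect to the inner product ⟨x,y⟩_D = xᵀ·D·y). (Paper: part of the content of Proposition 7.4, cf. the symmetry used in the proof of Proposition 7.2.) -/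
/-!
With `W = D⁻¹` positive definite and `Q = B W Bᴴ`, the key fact is the cancellation
`Bᴴ L B W Bᴴ = Bᴴ`: the defect `X = Bᴴ L Q - Bᴴ` satisfies `B W X = Q L Q - Q = 0`, hence
`Xᴴ W X = 0` and `X = 0` by definiteness of `W`. Idempotency of `P = W Bᴴ L B` follows at once.
Since `Q` is Hermitian, `Lᴴ` is a generalized inverse of `Q` as well, and the cancellation for
both `L` and `Lᴴ` gives `Bᴴ L B = Bᴴ Lᴴ B`, i.e. `D P = Bᴴ L B` is Hermitian.
-/

open Matrix
open scoped ComplexOrder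

namespace Matrix

variable {𝕜 : Type*} [RCLike 𝕜] {m n : Type*}

theorem PosDef.eq_zero_of_conjTranspose_mul_mul_eq_zero [Fintype m] {W : Matrix m m 𝕜}
    (hW : W.PosDef) {X : Matrix m n 𝕜} (h : Xᴴ * W * X = 0) : X = 0 := by
  ext i j
  by_contra hne
  have hcol : (fun k => X k j) ≠ 0 := fun h0 => hne (congrFun h0 i)
  have hpos := hW.dotProduct_mulVec_pos hcol
  have hjj : star (fun k => X k j) ⬝ᵥ W *ᵥ (fun k => X k j) = (Xᴴ * W * X) j j := by
    simp only [mul_apply, dotProduct, mulVec, Pi.star_apply, conjTranspose_apply,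
      Finset.mul_sum, Finset.sum_mul, mul_assoc]
    exact Finset.sum_comm
  rw [hjj, h] at hpos
  exact lt_irrefl _ hpos

def IsGenInv [Fintype n] (Q L : Matrix n n 𝕜) : Prop := Q * L * Q = Q

theorem IsGenInv.conjTranspose [Fintype n] {Q L : Matrix n n 𝕜} (h : IsGenInv Q L) :
    IsGenInv Qᴴ Lᴴ := by
  simpa only [IsGenInv, conjTranspose_mul, Matrix.mul_assoc] using congrArg (·ᴴ) h

theorem IsGenInv.conjTranspose_right [Fintype n] {Q L : Matrix n n 𝕜} (hQ : Q.IsHermitian)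
    (h : IsGenInv Q L) : IsGenInv Q Lᴴ := by
  simpa only [hQ.eq] using h.conjTranspose

section

variable [Fintype m] [Fintype n] {W : Matrix m m 𝕜} {B : Matrix n m 𝕜} {L : Matrix n n 𝕜}

theorem IsGenInv.conjTranspose_mul_mul_mul_mul_conjTranspose (hW : W.PosDef)
    (hL : IsGenInv (B * W * Bᴴ) L) : Bᴴ * L * B * W * Bᴴ = Bᴴ := by
  set X := Bᴴ * L * B * W * Bᴴ - Bᴴ
  have hBWX : B * W * X = 0 := by
    simp only [X, Matrix.mul_sub, sub_eq_zero, ← Matrix.mul_assoc]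
    simpa only [IsGenInv, ← Matrix.mul_assoc] using hL
  have hXH : Xᴴ = B * W * Bᴴ * Lᴴ * B - B := by
    simp only [X, conjTranspose_sub, conjTranspose_mul, conjTranspose_conjTranspose,
      hW.isHermitian.eq, Matrix.mul_assoc]
  have hXWX : Xᴴ * W * X = 0 := calc
    Xᴴ * W * X = B * W * Bᴴ * Lᴴ * (B * W * X) - B * W * X := by
      simp only [hXH, Matrix.sub_mul, Matrix.mul_assoc]
    _ = 0 := by rw [hBWX, Matrix.mul_zero, sub_zero]
  exact sub_eq_zero.mp (hW.eq_zero_of_conjTranspose_mul_mul_eq_zero hXWX)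

theorem IsGenInv.mul_mul_conjTranspose_mul_mul (hW : W.PosDef)
    (hL : IsGenInv (B * W * Bᴴ) L) : B * W * Bᴴ * L * B = B := by
  have hLH : IsGenInv (B * W * Bᴴ) Lᴴ :=
    hL.conjTranspose_right (isHermitian_mul_mul_conjTranspose B hW.isHermitian)
  simpa only [conjTranspose_mul, conjTranspose_conjTranspose, hW.isHermitian.eq,
    Matrix.mul_assoc] using congrArg (·ᴴ) (hLH.conjTranspose_mul_mul_mul_mul_conjTranspose hW)

theorem IsGenInv.isHermitian_conjTranspose_mul_mul (hW : W.PosDef)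
    (hL : IsGenInv (B * W * Bᴴ) L) : (Bᴴ * L * B).IsHermitian := by
  have hLH : IsGenInv (B * W * Bᴴ) Lᴴ :=
    hL.conjTranspose_right (isHermitian_mul_mul_conjTranspose B hW.isHermitian)
  calc (Bᴴ * L * B)ᴴ = Bᴴ * Lᴴ * B := by
        simp only [conjTranspose_mul, conjTranspose_conjTranspose, Matrix.mul_assoc]
    _ = Bᴴ * L * B * W * Bᴴ * Lᴴ * B := by
        rw [hL.conjTranspose_mul_mul_mul_mul_conjTranspose hW]
    _ = Bᴴ * L * (B * W * Bᴴ * Lᴴ * B) := by simp only [Matrix.mul_assoc]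
    _ = Bᴴ * L * B := by rw [hLH.mul_mul_conjTranspose_mul_mul hW]

theorem IsGenInv.isIdempotentElem_mul_conjTranspose_mul_mul (hW : W.PosDef)
    (hL : IsGenInv (B * W * Bᴴ) L) : IsIdempotentElem (W * Bᴴ * L * B) := by
  calc W * Bᴴ * L * B * (W * Bᴴ * L * B) = W * (Bᴴ * L * B * W * Bᴴ) * L * B := by
        simp only [Matrix.mul_assoc]
    _ = W * Bᴴ * L * B := by rw [hL.conjTranspose_mul_mul_mul_mul_conjTranspose hW]

end

end Matrix

/-- **Part of Proposition 7.4.** Let `Q = B D⁻¹ Bᵀ` with `D` a positive diagonal matrix,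
let `L` be any generalized inverse of `Q`, and put `P := D⁻¹ Bᵀ L B`. Then `P` is
idempotent and `D * P` is symmetric (i.e. `P` is self-adjoint for `⟨x,y⟩_D = xᵀ D y`). -/
theorem projection_matrix_idempotent_selfadjoint
    {n m : ℕ} (B : Matrix (Fin n) (Fin m) ℝ) (d : Fin m → ℝ)
    (hd : ∀ i, 0 < d i)
    (L : Matrix (Fin n) (Fin n) ℝ)
    (hL : (B * (Matrix.diagonal d)⁻¹ * Bᵀ) * L * (B * (Matrix.diagonal d)⁻¹ * Bᵀ)
        = B * (Matrix.diagonal d)⁻¹ * Bᵀ) :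
    let P := (Matrix.diagonal d)⁻¹ * Bᵀ * L * B
    P * P = P ∧ (Matrix.diagonal d * P).IsSymm := by
  have hD : (diagonal d).PosDef := .diagonal hd
  rw [← conjTranspose_eq_transpose_of_trivial] at hL ⊢
  replace hL : IsGenInv (B * (diagonal d)⁻¹ * Bᴴ) L := hL
  refine ⟨hL.isIdempotentElem_mul_conjTranspose_mul_mul hD.inv, ?_⟩
  have hDP : diagonal d * ((diagonal d)⁻¹ * Bᴴ * L * B) = Bᴴ * L * B := by
    simp only [← Matrix.mul_assoc, mul_nonsing_inv _ ((isUnit_iff_isUnit_det _).mp hD.isUnit),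
      Matrix.one_mul]
  rw [hDP, IsSymm, ← conjTranspose_eq_transpose_of_trivial]
  exact hL.isHermitian_conjTranspose_mul_mul hD.inv
end

section
/- Let B be an n×m real matrix and D an m×m diagonal matrix with positive diagonal entries, set Q = B·D⁻¹·Bᵀ, equip ℝᵐ with the inner product ⟨x,y⟩_D = xᵀ·D·y, and let L be any generalized inverse of Q. Let P : ℝᵐ → ℝᵐ be the orthogonal projection of (ℝᵐ, ⟨·,·⟩_D) onto the orthogonal complement of ker(B). Then for all γ₁, γ₂ ∈ ℝᵐ: ⟨γ₁, P(γ₂)⟩_D = (B·γ₁)ᵀ·L·(B·γ₂). In words: the energy pairing of the boundaries ν_i = B·γ_i equals the D-inner product of γ₁ with the projection of γ₂. (Paper: Proposition 6.1.) -/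
/-!
Since `P γ₂` is `D`-orthogonal to `ker B`, the vector `D (P γ₂)` is orthogonal to `ker B`, so it
equals `Bᵀ x` for some `x`; then `Q x = B D⁻¹ Bᵀ x = B (P γ₂) = B γ₂`. Because `D⁻¹` is positive
definite, `ker Q = ker Bᵀ`, and `Q L Q = Q` upgrades to `Bᵀ L Q = Bᵀ`. Hence
`⟨γ₁, P γ₂⟩_D = γ₁ ⬝ Bᵀ x = γ₁ ⬝ Bᵀ L Q x = (B γ₁) ⬝ L (B γ₂)`.
-/

open Matrix

namespace Matrix

variable {m n : Type*} [Fintype m] [Fintype n]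

theorem exists_conjTranspose_mulVec_eq_of_forall_mulVec_eq_zero {𝕜 : Type*} [RCLike 𝕜]
    [DecidableEq m] [DecidableEq n] (A : Matrix m n 𝕜) (v : n → 𝕜)
    (hv : ∀ y, A *ᵥ y = 0 → v ⬝ᵥ star y = 0) : ∃ x, Aᴴ *ᵥ x = v := by
  have hmem : WithLp.toLp 2 v ∈ (LinearMap.ker A.toEuclideanLin)ᗮ :=
    fun y hy => hv y.ofLp (congrArg WithLp.ofLp hy)
  rw [LinearMap.orthogonal_ker, ← toEuclideanLin_conjTranspose_eq_adjoint] at hmem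
  obtain ⟨x, hx⟩ := hmem
  exact ⟨x.ofLp, congrArg WithLp.ofLp hx⟩

namespace PosDef

variable {R : Type*} [CommRing R] [PartialOrder R] [StarRing R] {M : Matrix m m R}

theorem conjTranspose_mulVec_eq_zero_of_mulVec_eq_zero (hM : M.PosDef) (A : Matrix n m R)
    {x : n → R} (hx : (A * M * Aᴴ) *ᵥ x = 0) : Aᴴ *ᵥ x = 0 := by
  by_contra hne
  have hpos := hM.dotProduct_mulVec_pos hne
  rw [star_mulVec, conjTranspose_conjTranspose, dotProduct_mulVec, vecMul_vecMul,
    ← dotProduct_mulVec, mulVec_mulVec, hx, dotProduct_zero] at hpos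
  exact hpos.false

theorem conjTranspose_mul_mul_eq_of_mul_mul_eq_self (hM : M.PosDef) (A : Matrix n m R)
    {L : Matrix n n R} (hL : A * M * Aᴴ * L * (A * M * Aᴴ) = A * M * Aᴴ) :
    Aᴴ * L * (A * M * Aᴴ) = Aᴴ := by
  refine ext_iff_mulVec.2 fun x => ?_
  have h := hM.conjTranspose_mulVec_eq_zero_of_mulVec_eq_zero A
    (x := (L * (A * M * Aᴴ)) *ᵥ x - x) <| by
      rw [mulVec_sub, mulVec_mulVec, ← mul_assoc, hL, sub_self]
  rwa [mulVec_sub, mulVec_mulVec, ← Matrix.mul_assoc, sub_eq_zero] at h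

end PosDef

end Matrix

/-- **Proposition 6.1.** Let `Q = B D⁻¹ Bᵀ` with `D` a positive diagonal matrix, let `L` be
any generalized inverse of `Q`, and let `P` be the orthogonal projection of
`(ℝᵐ, ⟨x,y⟩_D = xᵀ D y)` onto the orthogonal complement of `ker B` (characterized by:
`B (P γ) = B γ`, i.e. `γ - P γ ∈ ker B`, and `P γ` is `D`-orthogonal to `ker B`). Then for
all `γ₁, γ₂ ∈ ℝᵐ` the inner product `⟨γ₁, P γ₂⟩_D` equals the energy pairing
`(B γ₁)ᵀ L (B γ₂)` of the boundaries. -/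
theorem energy_pairing_via_projection
    {n m : ℕ} (B : Matrix (Fin n) (Fin m) ℝ) (d : Fin m → ℝ)
    (hd : ∀ i, 0 < d i)
    (L : Matrix (Fin n) (Fin n) ℝ)
    (hL : (B * (Matrix.diagonal d)⁻¹ * Bᵀ) * L * (B * (Matrix.diagonal d)⁻¹ * Bᵀ)
        = B * (Matrix.diagonal d)⁻¹ * Bᵀ)
    (P : (Fin m → ℝ) → (Fin m → ℝ))
    (hP1 : ∀ γ : Fin m → ℝ, B.mulVec (P γ) = B.mulVec γ)
    (hP2 : ∀ γ y : Fin m → ℝ, B.mulVec y = 0 →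
      P γ ⬝ᵥ (Matrix.diagonal d).mulVec y = 0)
    (γ₁ γ₂ : Fin m → ℝ) :
    γ₁ ⬝ᵥ (Matrix.diagonal d).mulVec (P γ₂) = B.mulVec γ₁ ⬝ᵥ L.mulVec (B.mulVec γ₂) := by
  set D := Matrix.diagonal d
  have hD : D.PosDef := posDef_diagonal_iff.2 hd
  have hD_symm (u v : Fin m → ℝ) : D *ᵥ u ⬝ᵥ v = u ⬝ᵥ D *ᵥ v := by
    rw [← vecMul_transpose, diagonal_transpose, ← dotProduct_mulVec]
  obtain ⟨x, hx⟩ := exists_conjTranspose_mulVec_eq_of_forall_mulVec_eq_zero B (D *ᵥ P γ₂)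
    fun y hy => by rw [star_trivial, hD_symm]; exact hP2 γ₂ y hy
  rw [conjTranspose_eq_transpose_of_trivial] at hx
  have hQx : (B * D⁻¹ * Bᵀ) *ᵥ x = B *ᵥ γ₂ := by
    rw [← mulVec_mulVec, hx, mulVec_mulVec, Matrix.mul_assoc,
      nonsing_inv_mul D ((isUnit_iff_isUnit_det D).1 hD.isUnit), Matrix.mul_one, hP1]
  have hBL : Bᵀ * L * (B * D⁻¹ * Bᵀ) = Bᵀ := by
    rw [← conjTranspose_eq_transpose_of_trivial] at hL ⊢
    exact hD.inv.conjTranspose_mul_mul_eq_of_mul_mul_eq_self B hL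
  calc γ₁ ⬝ᵥ D *ᵥ P γ₂ = γ₁ ⬝ᵥ (Bᵀ * L * (B * D⁻¹ * Bᵀ)) *ᵥ x := by rw [hBL, hx]
    _ = B *ᵥ γ₁ ⬝ᵥ L *ᵥ B *ᵥ γ₂ := by
      rw [← mulVec_mulVec, hQx, ← mulVec_mulVec, dotProduct_mulVec, vecMul_transpose]
end

section
/- Let V be a finite-dimensional real inner product space, let H ⊆ V be a subspace, and let u ∈ V with u ∉ H. Let P and P' denote the orthogonal projections of V onto H^⊥ and onto (H + span{u})^⊥, respectively. Then P(u) ≠ 0, and for all v₁, v₂ ∈ V: ⟨v₁, P'(v₂)⟩ = ⟨v₁, P(v₂)⟩ − ⟨v₁, P(u)⟩·⟨P(u), v₂⟩ / ⟨P(u), P(u)⟩. (Paper: linear-algebra form of Theorem A / Theorem 8.2, Rayleigh's law for energy pairings: contracting the edge segment with 1-chain u changes the energy pairing by the stated rank-one correction.) -/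
open Submodule

/-! Write `w = P u`. Since `u - w ∈ H`, the subspace `H + span {u}` is the orthogonal sum
`H ⊕ span {w}`, so `P'` is `P` minus the projection onto the line through `w`, which is the
rank-one map `v ↦ (⟨w, v⟩ / ⟨w, w⟩) w`. -/

namespace Submodule

variable {𝕜 E : Type*} [RCLike 𝕜] [NormedAddCommGroup E] [InnerProductSpace 𝕜 E]

theorem sup_span_singleton_eq_of_sub_mem {H : Submodule 𝕜 E} {a b : E} (h : a - b ∈ H) :
    H ⊔ 𝕜 ∙ a = H ⊔ 𝕜 ∙ b := by
  have key : ∀ {x y : E}, x - y ∈ H → H ⊔ 𝕜 ∙ x ≤ H ⊔ 𝕜 ∙ y := fun {x y} hxy ↦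
    sup_le le_sup_left <| (span_singleton_le_iff_mem _ _).mpr <| by
      simpa using add_mem (mem_sup_left hxy) (mem_sup_right (mem_span_singleton_self y))
  exact le_antisymm (key h) (key (by simpa using neg_mem h))

theorem sup_span_singleton_starProjection_orthogonal (H : Submodule 𝕜 E)
    [H.HasOrthogonalProjection] (u : E) :
    H ⊔ 𝕜 ∙ Hᗮ.starProjection u = H ⊔ 𝕜 ∙ u :=
  sup_span_singleton_eq_of_sub_mem <| by
    simp [starProjection_orthogonal_val]

theorem starProjection_orthogonal_eq_zero_iff (H : Submodule 𝕜 E) [H.HasOrthogonalProjection]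
    {u : E} : Hᗮ.starProjection u = 0 ↔ u ∈ H := by
  rw [starProjection_apply_eq_zero_iff, orthogonal_orthogonal]

theorem starProjection_orthogonal_sup_span_singleton (H : Submodule 𝕜 E)
    [H.HasOrthogonalProjection] (u : E) [(H ⊔ 𝕜 ∙ u)ᗮ.HasOrthogonalProjection] (v : E) :
    (H ⊔ 𝕜 ∙ u)ᗮ.starProjection v =
      Hᗮ.starProjection v - (𝕜 ∙ Hᗮ.starProjection u).starProjection v := by
  set L := 𝕜 ∙ Hᗮ.starProjection u
  have hLH : L ≤ Hᗮ := (span_singleton_le_iff_mem _ _).mpr (starProjection_apply_mem _ u)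
  have hHL : H ≤ Lᗮ := le_orthogonal_iff_le_orthogonal.mp hLH
  have hK : H ⊔ 𝕜 ∙ u = H ⊔ L := (H.sup_span_singleton_starProjection_orthogonal u).symm
  have h_sym : Hᗮ.starProjection v - L.starProjection v =
      Lᗮ.starProjection v - H.starProjection v := by
    simp only [starProjection_orthogonal_val, sub_right_comm]
  have h_mem : Hᗮ.starProjection v - L.starProjection v ∈ (H ⊔ 𝕜 ∙ u)ᗮ := by
    rw [hK, ← inf_orthogonal, mem_inf]
    refine ⟨sub_mem (starProjection_apply_mem _ v) (hLH (starProjection_apply_mem _ v)), ?_⟩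
    exact h_sym ▸ sub_mem (starProjection_apply_mem _ v) (hHL (starProjection_apply_mem _ v))
  have h_rest : H.starProjection v + L.starProjection v ∈ H ⊔ 𝕜 ∙ u :=
    hK ▸ add_mem (mem_sup_left (starProjection_apply_mem _ v))
      (mem_sup_right (starProjection_apply_mem _ v))
  exact eq_starProjection_of_mem_orthogonal' h_mem (le_orthogonal_orthogonal _ h_rest)
    (by rw [starProjection_orthogonal_val]; abel)

end Submodule

/-- **Theorem A / Theorem 8.2 (Rayleigh's law for energy pairings), linear-algebra form.**
Let `V` be a finite-dimensional real inner product space, `H ⊆ V` a subspace, and `u ∉ H`.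
Let `P` and `P'` be the orthogonal projections onto `Hᗮ` and `(H + span {u})ᗮ`. Then
`P u ≠ 0`, and for all `v₁, v₂ ∈ V`:
`⟨v₁, P' v₂⟩ = ⟨v₁, P v₂⟩ - ⟨v₁, P u⟩ ⟨P u, v₂⟩ / ⟨P u, P u⟩`. -/
theorem rayleigh_law_energy_pairing
    {V : Type*} [NormedAddCommGroup V] [InnerProductSpace ℝ V] [FiniteDimensional ℝ V]
    (H : Submodule ℝ V) (u : V) (hu : u ∉ H) :
    ((orthogonalProjection Hᗮ u : V) ≠ 0) ∧
    ∀ v₁ v₂ : V,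
      (inner ℝ v₁ ((orthogonalProjection (H ⊔ Submodule.span ℝ {u})ᗮ v₂ : V)) : ℝ) =
      (inner ℝ v₁ ((orthogonalProjection Hᗮ v₂ : V)) : ℝ) -
        (inner ℝ v₁ ((orthogonalProjection Hᗮ u : V)) : ℝ)
          * (inner ℝ ((orthogonalProjection Hᗮ u : V)) v₂ : ℝ)
          / (inner ℝ ((orthogonalProjection Hᗮ u : V)) ((orthogonalProjection Hᗮ u : V)) : ℝ) := by
  simp only [coe_orthogonalProjectionOnto_apply]
  refine ⟨(H.starProjection_orthogonal_eq_zero_iff).not.mpr hu, fun v₁ v₂ ↦ ?_⟩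
  rw [H.starProjection_orthogonal_sup_span_singleton u, starProjection_singleton, inner_sub_right,
    real_inner_smul_right, real_inner_self_eq_norm_sq, RCLike.ofReal_real_eq_id, id]
  ring
end

section
/- Let B be an n×m real matrix and D an m×m diagonal matrix with positive diagonal entries, set Q = B·D⁻¹·Bᵀ, equip ℝᵐ with the inner product ⟨x,y⟩_D = xᵀ·D·y, let L be any generalized inverse of Q, and put Ξ := Bᵀ·L·B. Fix a column index e ∈ {1,…,m} and assume the e-th column of B is nonzero. Then the diagonal entry r := Ξ_{ee} is strictly positive, and the matrix S := D⁻¹·Ξ − (1/r)·D⁻¹·(Ξ·δ_e)·(Ξ·δ_e)ᵀ is the matrix of the orthogonal projection of (ℝᵐ, ⟨·,·⟩_D) onto the orthogonal complement of ker(B) + span{δ_e}: for every x ∈ ℝᵐ, x − S·x ∈ ker(B) + span{δ_e} and S·x is ⟨·,·⟩_D-orthogonal to every vector of ker(B) + span{δ_e}. (Paper: the projection matrix formula (8.3) for π'_{G/e} stated in the Introduction and proved in Theorem 8.2.) -/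
/-!
Since `D⁻¹` is positive definite, `Q * L * Q = Q` forces `Q * L * B = B`; hence `Ξ` is symmetric,
kills `ker B`, and `P = D⁻¹ Ξ` is the `D`-orthogonal projection onto the complement of `ker B`.
Enlarging `ker B` by `δ_e` is one Gram–Schmidt step: subtract from `P x` its `D`-component along
`P δ_e`, whose squared `D`-length is `⟪P δ_e, δ_e⟫_D = Ξ_ee`. This is positive because `P δ_e = 0`
would put `δ_e` in `ker B`, i.e. make the `e`-th column of `B` vanish.
-/

open Matrix

namespace Matrix

theorem PosDef.eq_zero_of_mul_mul_transpose_eq_zero {ι κ : Type*} [Fintype κ]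
    {W : Matrix κ κ ℝ} (hW : W.PosDef) {M : Matrix ι κ ℝ} (h : M * W * Mᵀ = 0) : M = 0 := by
  ext i j
  suffices hrow : M i = 0 from congrFun hrow j
  by_contra hne
  have hii : (M * W * Mᵀ) i i = M i ⬝ᵥ W *ᵥ M i := by
    rw [Matrix.mul_assoc, mul_apply']; rfl
  simpa [h, ← hii] using hW.dotProduct_mulVec_pos hne

theorem PosDef.isSymm {ι : Type*} {D : Matrix ι ι ℝ} (hD : D.PosDef) : D.IsSymm := by
  simpa [IsSymm, conjTranspose_eq_transpose_of_trivial] using hD.1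

theorem PosDef.mul_mul_transpose_mul_mul_eq_of_gInv {ι κ : Type*} [Fintype ι] [Fintype κ]
    {W : Matrix κ κ ℝ} (hW : W.PosDef) {B : Matrix ι κ ℝ} {L : Matrix ι ι ℝ}
    (hL : B * W * Bᵀ * L * (B * W * Bᵀ) = B * W * Bᵀ) :
    B * W * Bᵀ * L * B = B := by
  set Q := B * W * Bᵀ
  have hQ : Qᵀ = Q := by simp [Q, hW.isSymm.eq, Matrix.mul_assoc]
  have hLt : Q * Lᵀ * Q = Q := by
    simpa [hQ, Matrix.mul_assoc] using congrArg (·ᵀ) hL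
  refine sub_eq_zero.mp (hW.eq_zero_of_mul_mul_transpose_eq_zero ?_)
  calc (Q * L * B - B) * W * (Q * L * B - B)ᵀ
      = Q * L * Q * Lᵀ * Q - Q * L * Q - Q * Lᵀ * Q + Q := by
        simp only [Q, Matrix.sub_mul, Matrix.mul_sub, transpose_sub, transpose_mul,
          transpose_transpose, hW.isSymm.eq, Matrix.mul_assoc]
        abel
    _ = 0 := by rw [hL, hLt]; abel

theorem isSymm_transpose_mul_mul_of_mul_mul_transpose_mul_mul_eq {ι κ : Type*} [Fintype ι]
    [Fintype κ] {W : Matrix κ κ ℝ} (hW : W.IsSymm) {B : Matrix ι κ ℝ} {L : Matrix ι ι ℝ}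
    (h : B * W * Bᵀ * L * B = B) : (Bᵀ * L * B).IsSymm := by
  have hT : Bᵀ * Lᵀ * (B * W * Bᵀ) = Bᵀ := by
    simpa [hW.eq, Matrix.mul_assoc] using congrArg (·ᵀ) h
  calc (Bᵀ * L * B)ᵀ = Bᵀ * Lᵀ * B := by simp [Matrix.mul_assoc]
    _ = Bᵀ * Lᵀ * (B * W * Bᵀ * L * B) := by rw [h]
    _ = Bᵀ * Lᵀ * (B * W * Bᵀ) * L * B := by simp only [Matrix.mul_assoc]
    _ = Bᵀ * L * B := by rw [hT]

theorem IsSymm.mulVec_dotProduct_eq_zero {ι : Type*} [Fintype ι] {Ξ : Matrix ι ι ℝ}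
    (hΞ : Ξ.IsSymm) {K : Submodule ℝ (ι → ℝ)} (hK : K ≤ LinearMap.ker Ξ.mulVecLin) (x : ι → ℝ)
    {k : ι → ℝ} (hk : k ∈ K) : Ξ *ᵥ x ⬝ᵥ k = 0 := by
  rw [dotProduct_comm, dotProduct_mulVec, ← mulVec_transpose, hΞ.eq]
  simp [show Ξ *ᵥ k = 0 from hK hk]

section ContractedProjection

variable {ι : Type*} [Fintype ι] [DecidableEq ι]

theorem PosDef.inv_mulVec_dotProduct_mulVec {D : Matrix ι ι ℝ} (hD : D.PosDef) (u y : ι → ℝ) :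
    D⁻¹ *ᵥ u ⬝ᵥ D *ᵥ y = u ⬝ᵥ y := by
  rw [dotProduct_mulVec, ← mulVec_transpose, hD.isSymm.eq, mulVec_mulVec,
    mul_nonsing_inv _ ((isUnit_iff_isUnit_det D).mp hD.isUnit), one_mulVec]

/-- When `D⁻¹ * Ξ` is the `D`-orthogonal projection onto the complement of `K`, this is the one onto
the complement of `K ⊔ span {δ}`: the paper's `π'_{G/e}` for `K` the cycle space and `δ = δ_e`. -/
noncomputable def contractedProjection (D Ξ : Matrix ι ι ℝ) (δ : ι → ℝ) : Matrix ι ι ℝ :=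
  D⁻¹ * Ξ - (1 / (Ξ *ᵥ δ ⬝ᵥ δ)) • (D⁻¹ * vecMulVec (Ξ *ᵥ δ) (Ξ *ᵥ δ))

theorem contractedProjection_mulVec (D Ξ : Matrix ι ι ℝ) (δ x : ι → ℝ) :
    contractedProjection D Ξ δ *ᵥ x =
      D⁻¹ *ᵥ (Ξ *ᵥ x - ((Ξ *ᵥ δ ⬝ᵥ x) / (Ξ *ᵥ δ ⬝ᵥ δ)) • Ξ *ᵥ δ) := by
  rw [contractedProjection, sub_mulVec, smul_mulVec, ← mulVec_mulVec, ← mulVec_mulVec,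
    vecMulVec_mulVec, mulVec_sub, mulVec_smul, mulVec_smul, op_smul_eq_smul, smul_smul, one_div,
    div_eq_inv_mul]

variable {D Ξ : Matrix ι ι ℝ} {K : Submodule ℝ (ι → ℝ)} {δ : ι → ℝ}

theorem mulVec_dotProduct_self_pos_of_notMem (hD : D.PosDef) (hΞ : Ξ.IsSymm)
    (hK : K ≤ LinearMap.ker Ξ.mulVecLin) (hsub : ∀ x, x - D⁻¹ *ᵥ Ξ *ᵥ x ∈ K) (hδ : δ ∉ K) :
    0 < Ξ *ᵥ δ ⬝ᵥ δ := by
  have hv : Ξ *ᵥ δ ≠ 0 := fun h => hδ (by simpa [h] using hsub δ)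
  have horth : Ξ *ᵥ δ ⬝ᵥ (δ - D⁻¹ *ᵥ Ξ *ᵥ δ) = 0 := hΞ.mulVec_dotProduct_eq_zero hK δ (hsub δ)
  rw [dotProduct_sub, sub_eq_zero] at horth
  simpa [horth] using hD.inv.dotProduct_mulVec_pos hv

theorem sub_contractedProjection_mulVec_mem (hsub : ∀ x, x - D⁻¹ *ᵥ Ξ *ᵥ x ∈ K) (x : ι → ℝ) :
    x - contractedProjection D Ξ δ *ᵥ x ∈ K ⊔ Submodule.span ℝ {δ} := by
  set c := (Ξ *ᵥ δ ⬝ᵥ x) / (Ξ *ᵥ δ ⬝ᵥ δ)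
  have hsplit : x - contractedProjection D Ξ δ *ᵥ x =
      (x - D⁻¹ *ᵥ Ξ *ᵥ x) + c • (δ - (δ - D⁻¹ *ᵥ Ξ *ᵥ δ)) := by
    rw [contractedProjection_mulVec, mulVec_sub, mulVec_smul, sub_sub_cancel]
    abel
  rw [hsplit]
  exact add_mem (Submodule.mem_sup_left (hsub x)) <| Submodule.smul_mem _ _ <|
    sub_mem (Submodule.mem_sup_right (Submodule.mem_span_singleton_self δ))
      (Submodule.mem_sup_left (hsub δ))

theorem contractedProjection_mulVec_dotProduct_mulVec_eq_zero (hD : D.PosDef) (hΞ : Ξ.IsSymm)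
    (hK : K ≤ LinearMap.ker Ξ.mulVecLin) (hr : Ξ *ᵥ δ ⬝ᵥ δ ≠ 0) (x : ι → ℝ) {y : ι → ℝ}
    (hy : y ∈ K ⊔ Submodule.span ℝ {δ}) :
    contractedProjection D Ξ δ *ᵥ x ⬝ᵥ D *ᵥ y = 0 := by
  obtain ⟨k, hk, _, hc, rfl⟩ := Submodule.mem_sup.mp hy
  obtain ⟨a, rfl⟩ := Submodule.mem_span_singleton.mp hc
  have hswap : Ξ *ᵥ x ⬝ᵥ δ = Ξ *ᵥ δ ⬝ᵥ x := by
    rw [dotProduct_comm, dotProduct_mulVec, ← mulVec_transpose, hΞ.eq]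
  rw [contractedProjection_mulVec, hD.inv_mulVec_dotProduct_mulVec]
  simp only [sub_dotProduct, dotProduct_add, smul_dotProduct, dotProduct_smul, smul_eq_mul,
    hΞ.mulVec_dotProduct_eq_zero hK _ hk, hswap]
  field_simp
  ring

end ContractedProjection

end Matrix

/-- **The contracted projection matrix formula (8.3).** Let `Q = B D⁻¹ Bᵀ` with `D` a
positive diagonal matrix, `L` any generalized inverse of `Q`, and `Ξ := Bᵀ L B`. Fix a
column index `e` with nonzero `e`-th column of `B`. Then `r := Ξ e e > 0`, and the matrix
`S := D⁻¹ Ξ - (1/r) D⁻¹ (Ξ δ_e)(Ξ δ_e)ᵀ` is the matrix of the orthogonal projection of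
`(ℝᵐ, ⟨x,y⟩_D)` onto the orthogonal complement of `ker B + span {δ_e}`: for every `x`,
`x - S x ∈ ker B + span {δ_e}` and `S x` is `D`-orthogonal to `ker B + span {δ_e}`. -/
theorem contracted_projection_matrix
    {n m : ℕ} (B : Matrix (Fin n) (Fin m) ℝ) (d : Fin m → ℝ)
    (hd : ∀ i, 0 < d i)
    (L : Matrix (Fin n) (Fin n) ℝ)
    (hL : (B * (Matrix.diagonal d)⁻¹ * Bᵀ) * L * (B * (Matrix.diagonal d)⁻¹ * Bᵀ)
        = B * (Matrix.diagonal d)⁻¹ * Bᵀ)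
    (e : Fin m) (he : (fun i => B i e) ≠ 0) :
    let Ξ := Bᵀ * L * B
    let r := Ξ e e
    let S := (Matrix.diagonal d)⁻¹ * Ξ -
      (1 / r) • ((Matrix.diagonal d)⁻¹ *
        Matrix.vecMulVec (Ξ.mulVec (Pi.single e 1)) (Ξ.mulVec (Pi.single e 1)))
    0 < r ∧
    ∀ x : Fin m → ℝ,
      (x - S.mulVec x ∈
        LinearMap.ker B.mulVecLin ⊔ Submodule.span ℝ {Pi.single e (1 : ℝ)}) ∧
      (∀ y ∈ LinearMap.ker B.mulVecLin ⊔ Submodule.span ℝ {Pi.single e (1 : ℝ)},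
        S.mulVec x ⬝ᵥ (Matrix.diagonal d).mulVec y = 0) := by
  intro Ξ r S
  have hD : (diagonal d).PosDef := posDef_diagonal_iff.mpr hd
  have hQLB : B * (diagonal d)⁻¹ * Bᵀ * L * B = B := hD.inv.mul_mul_transpose_mul_mul_eq_of_gInv hL
  have hΞ : Ξ.IsSymm := isSymm_transpose_mul_mul_of_mul_mul_transpose_mul_mul_eq hD.inv.isSymm hQLB
  have hK : LinearMap.ker B.mulVecLin ≤ LinearMap.ker Ξ.mulVecLin := fun k hk => by
    rw [LinearMap.mem_ker, mulVecLin_apply] at hk ⊢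
    rw [← mulVec_mulVec, ← mulVec_mulVec, hk, mulVec_zero, mulVec_zero]
  have hsub : ∀ x, x - (diagonal d)⁻¹ *ᵥ Ξ *ᵥ x ∈ LinearMap.ker B.mulVecLin := fun x => by
    simp [Ξ, mulVec_sub, ← Matrix.mul_assoc, hQLB]
  have hδ : Pi.single e (1 : ℝ) ∉ LinearMap.ker B.mulVecLin := by
    rwa [LinearMap.mem_ker, mulVecLin_apply, mulVec_single_one]
  have hr : r = Ξ *ᵥ Pi.single e 1 ⬝ᵥ Pi.single e 1 := by simp [r]
  have hS : S = contractedProjection (diagonal d) Ξ (Pi.single e 1) := by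
    rw [contractedProjection, ← hr]
  have hrpos : 0 < r := hr ▸ mulVec_dotProduct_self_pos_of_notMem hD hΞ hK hsub hδ
  rw [hS]
  exact ⟨hrpos, fun x => ⟨sub_contractedProjection_mulVec_mem hsub x,
    fun y hy => contractedProjection_mulVec_dotProduct_mulVec_eq_zero hD hΞ hK
      (hr ▸ hrpos.ne') x hy⟩⟩
end

section
/- Let B be an n×m real matrix (n ≥ 2) each of whose columns equals δ_u − δ_v for some pair of distinct indices u ≠ v, and assume the kernel of Bᵀ is exactly the span of the all-ones vector 𝟙 ∈ ℝⁿ. Let D be an m×m diagonal matrix with positive diagonal entries and set Q = B·D⁻¹·Bᵀ. Fix a column index e and suppose (after relabeling) the e-th column of B equals d := δ_a − δ_n with a < n. Let C be the (n−1)×n matrix with C·δ_i = δ_i for i < n and C·δ_n = δ_a; let B̂ and D̂ be obtained from B and D by deleting the e-th column (resp. the e-th row and column), and set B' := C·B̂ and Q' := B'·D̂⁻¹·B'ᵀ. Let L be a generalized inverse of Q and L' a generalized inverse of Q'. Then dᵀ·L·d > 0, and for all balanced vectors ν₁, ν₂ ∈ ℝⁿ: (C·ν₁)ᵀ·L'·(C·ν₂)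 = ν₁ᵀ·L·ν₂ − (ν₁ᵀ·L·d)·(dᵀ·L·ν₂)/(dᵀ·L·d). (Paper: Theorem A / Theorem 8.2, Rayleigh's law for energy pairings, in matrix form: the energy pairing on the contracted graph G/e equals the energy pairing on G minus the stated rank-one correction.) -/
/-!
Energy pairings do not depend on the generalized inverse: if `Q` is symmetric and `Q L Q = Q`,
then `(Q x)ᵀ L (Q y) = xᵀ Q y`, and every balanced vector is some `Q x` because `ker Q = ℝ 𝟙`.
Deleting the edge `e` splits the Laplacian as `Q = Q̂ + d_e⁻¹ d₀ d₀ᵀ`, while `Q' = C Q̂ Cᵀ`.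
Fix `z` with `Q z = d₀`; then `d₀ᵀ L d₀ = zᵀ Q z > 0`. Given `Q x = ν`, the potential
`u = x - (d₀ᵀ x / d₀ᵀ z) z` takes equal values at both ends of `e`, so it is `Cᵀ w` for a potential
`w` on `G / e`; as `Q̂ u = Q u` and `C d₀ = 0`, this `w` solves `Q' w = C ν`. Hence
`(C ν₁)ᵀ L' (C ν₂) = u₁ᵀ ν₂`, which expands to the rank-one correction.
-/

open Matrix

namespace Matrix

variable {ι κ μ R K : Type*}

theorem IsSymm.mul_mul_transpose [Fintype μ] [CommSemiring R] {W : Matrix μ μ R}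
    (hW : W.IsSymm) (B : Matrix ι μ R) : (B * W * Bᵀ).IsSymm := by
  rw [IsSymm, transpose_mul, transpose_mul, transpose_transpose, hW.eq, Matrix.mul_assoc]

theorem IsSymm.mulVec_dotProduct_mulVec_mulVec_s18 [Fintype ι] [CommSemiring R]
    {Q L : Matrix ι ι R} (hQ : Q.IsSymm) (hL : Q * L * Q = Q) (x y : ι → R) :
    Q *ᵥ x ⬝ᵥ L *ᵥ (Q *ᵥ y) = x ⬝ᵥ Q *ᵥ y := by
  rw [show Q *ᵥ x = x ᵥ* Q by rw [← mulVec_transpose, hQ.eq], ← dotProduct_mulVec,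
    mulVec_mulVec, mulVec_mulVec, hL]

theorem PosSemidef.dotProduct_mulVec_pos_of_mulVec_ne_zero [Fintype ι] {Q : Matrix ι ι ℝ}
    (hQ : Q.PosSemidef) {z : ι → ℝ} (hz : Q *ᵥ z ≠ 0) : 0 < z ⬝ᵥ Q *ᵥ z := by
  have hzero := hQ.dotProduct_mulVec_zero_iff z
  rw [star_trivial] at hzero
  exact (hQ.dotProduct_mulVec_nonneg z).lt_of_ne' (mt hzero.1 hz)

theorem exists_mulVec_eq_of_sum_eq_zero [Fintype ι] [Field K] [CharZero K] {Q : Matrix ι ι K}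
    (hsum : ∀ x, ∑ i, (Q *ᵥ x) i = 0) (hker : ∀ x, Q *ᵥ x = 0 → ∃ c, x = fun _ => c)
    {ν : ι → K} (hν : ∑ i, ν i = 0) : ∃ x, Q *ᵥ x = ν := by
  let V := LinearMap.ker (∑ i, LinearMap.proj i : (ι → K) →ₗ[K] K)
  have hV : ∀ v, v ∈ V ↔ ∑ i, v i = 0 := by simp [V]
  let f : V →ₗ[K] V := (Q.mulVecLin ∘ₗ V.subtype).codRestrict V fun v => (hV _).2 (hsum v)
  have hf : Function.Injective f := by
    refine (injective_iff_map_eq_zero f).2 fun v hv => ?_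
    obtain ⟨c, hc⟩ := hker v (congrArg Subtype.val hv)
    have hsum₀ := (hV v).1 v.2
    rw [hc, Finset.sum_const, smul_eq_zero] at hsum₀
    ext i
    rcases hsum₀ with hcard | rfl
    · exact (Finset.univ_eq_empty_iff.1 (Finset.card_eq_zero.1 hcard)).elim i
    · exact congrFun hc i
  obtain ⟨x, hx⟩ := LinearMap.injective_iff_surjective.1 hf ⟨ν, (hV ν).2 hν⟩
  exact ⟨x, congrArg Subtype.val hx⟩

theorem inv_diagonal_of_ne_zero [Fintype ι] [DecidableEq ι] [Field K] {v : ι → K}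
    (hv : ∀ i, v i ≠ 0) : (diagonal v)⁻¹ = diagonal v⁻¹ :=
  inv_eq_left_inv <| by
    rw [diagonal_mul_diagonal, ← diagonal_one]
    exact congrArg diagonal (funext fun i => inv_mul_cancel₀ (hv i))

theorem mul_inv_diagonal_mul_transpose_eq_succAbove_add [Field K] {m : ℕ}
    (B : Matrix ι (Fin (m + 1)) K) {w : Fin (m + 1) → K} (hw : ∀ j, w j ≠ 0)
    (e : Fin (m + 1)) :
    B * (diagonal w)⁻¹ * Bᵀ = B.submatrix id e.succAbove *
      (diagonal fun j => w (e.succAbove j))⁻¹ * (B.submatrix id e.succAbove)ᵀ +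
        (w e)⁻¹ • vecMulVec (Bᵀ e) (Bᵀ e) := by
  rw [inv_diagonal_of_ne_zero hw, inv_diagonal_of_ne_zero fun j => hw _]
  ext i k
  simp [mul_apply, diagonal_apply, Fin.sum_univ_succAbove _ e, vecMulVec_apply]
  ring

theorem sum_mul_mul_transpose_mulVec_eq_zero [Fintype ι] [Fintype μ] [CommSemiring R]
    {B : Matrix ι μ R} (hB : Bᵀ *ᵥ 1 = 0) (W : Matrix μ μ R) (x : ι → R) :
    ∑ i, ((B * W * Bᵀ) *ᵥ x) i = 0 := by
  rw [← one_dotProduct, Matrix.mul_assoc, ← mulVec_mulVec, dotProduct_mulVec,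
    ← mulVec_transpose, hB, zero_dotProduct]

theorem dotProduct_mul_mul_transpose_mulVec [Fintype ι] [Fintype μ] [CommSemiring R]
    (B : Matrix ι μ R) (W : Matrix μ μ R) (x : ι → R) :
    x ⬝ᵥ (B * W * Bᵀ) *ᵥ x = Bᵀ *ᵥ x ⬝ᵥ W *ᵥ (Bᵀ *ᵥ x) := by
  rw [← mulVec_mulVec, ← mulVec_mulVec, dotProduct_mulVec x B, ← mulVec_transpose]

theorem PosDef.transpose_mulVec_eq_zero_of_mul_mul_transpose [Fintype ι] [Fintype μ]
    {W : Matrix μ μ ℝ} (hW : W.PosDef) {B : Matrix ι μ ℝ} {x : ι → ℝ}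
    (hx : (B * W * Bᵀ) *ᵥ x = 0) : Bᵀ *ᵥ x = 0 := by
  by_contra hne
  have hpos := hW.dotProduct_mulVec_pos hne
  rw [star_trivial, ← dotProduct_mul_mul_transpose_mulVec, hx, dotProduct_zero] at hpos
  exact hpos.false

def contractLast [Zero R] [One R] {n : ℕ} (a : Fin n) : Matrix (Fin n) (Fin (n + 1)) R :=
  of fun i j => if j = Fin.last n then (if i = a then 1 else 0)
    else if j = i.castSucc then 1 else 0

section contractLast

variable [CommRing R] {n : ℕ} (a : Fin n)

theorem contractLast_col_castSucc (i : Fin n) :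
    (contractLast a : Matrix _ _ R).col i.castSucc = Pi.single i 1 := by
  ext k
  simp [contractLast, (Fin.castSucc_lt_last i).ne, Pi.single_apply, eq_comm]

theorem contractLast_col_last :
    (contractLast a : Matrix _ _ R).col (Fin.last n) = Pi.single a 1 := by
  ext k
  simp [contractLast, Pi.single_apply]

theorem contractLast_mulVec_sub_single :
    (contractLast a : Matrix _ _ R) *ᵥ (Pi.single a.castSucc 1 - Pi.single (Fin.last n) 1) =
      0 := by
  rw [mulVec_sub, mulVec_single_one, mulVec_single_one, contractLast_col_castSucc,
    contractLast_col_last, sub_self]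

theorem contractLast_transpose_mulVec (w : Fin n → R) :
    (contractLast a : Matrix _ _ R)ᵀ *ᵥ w = Fin.snoc w (w a) := by
  ext j
  induction j using Fin.lastCases with
  | last => simp [mulVec, dotProduct, contractLast]
  | cast i => simp [mulVec, dotProduct, contractLast, (Fin.castSucc_lt_last i).ne, eq_comm]

theorem contractLast_transpose_mulVec_init {u : Fin (n + 1) → R}
    (hu : (Pi.single a.castSucc 1 - Pi.single (Fin.last n) 1) ⬝ᵥ u = 0) :
    (contractLast a : Matrix _ _ R)ᵀ *ᵥ Fin.init u = u := by
  rw [sub_dotProduct, single_one_dotProduct, single_one_dotProduct, sub_eq_zero] at hu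
  rw [contractLast_transpose_mulVec, show Fin.init u a = u (Fin.last n) from hu,
    Fin.snoc_init_self]

end contractLast

section Contraction

variable [Fintype ι] [Fintype κ] [Field K] {Q P : Matrix ι ι K} {C : Matrix κ ι K}
  {d₀ z : ι → K} {c : K}

theorem exists_transpose_mulVec_eq_and_mulVec_eq
    (hsplit : Q = P + c • vecMulVec d₀ d₀) (hCd₀ : C *ᵥ d₀ = 0)
    (hlift : ∀ u, d₀ ⬝ᵥ u = 0 → ∃ w, Cᵀ *ᵥ w = u) (hz : Q *ᵥ z = d₀) (hr : d₀ ⬝ᵥ z ≠ 0)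
    (x : ι → K) :
    ∃ w, Cᵀ *ᵥ w = x - (d₀ ⬝ᵥ x / d₀ ⬝ᵥ z) • z ∧ (C * P * Cᵀ) *ᵥ w = C *ᵥ (Q *ᵥ x) := by
  have hu : d₀ ⬝ᵥ (x - (d₀ ⬝ᵥ x / d₀ ⬝ᵥ z) • z) = 0 := by
    rw [dotProduct_sub, dotProduct_smul, smul_eq_mul, div_mul_cancel₀ _ hr, sub_self]
  obtain ⟨w, hw⟩ := hlift _ hu
  refine ⟨w, hw, ?_⟩
  rw [← mulVec_mulVec, ← mulVec_mulVec, hw, eq_sub_of_add_eq hsplit.symm, sub_mulVec,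
    smul_mulVec, vecMulVec_mulVec, hu, MulOpposite.op_zero, zero_smul, smul_zero, sub_zero,
    mulVec_sub, mulVec_smul, hz, mulVec_sub, mulVec_smul, hCd₀, smul_zero, sub_zero]

theorem mulVec_dotProduct_mulVec_contraction {L : Matrix ι ι K} {L' : Matrix κ κ K}
    (hQ : Q.IsSymm) (hP : P.IsSymm) (hL : Q * L * Q = Q)
    (hL' : (C * P * Cᵀ) * L' * (C * P * Cᵀ) = C * P * Cᵀ)
    (hsplit : Q = P + c • vecMulVec d₀ d₀) (hCd₀ : C *ᵥ d₀ = 0)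
    (hlift : ∀ u, d₀ ⬝ᵥ u = 0 → ∃ w, Cᵀ *ᵥ w = u) (hz : Q *ᵥ z = d₀) (hr : d₀ ⬝ᵥ z ≠ 0)
    (x₁ x₂ : ι → K) :
    C *ᵥ (Q *ᵥ x₁) ⬝ᵥ L' *ᵥ (C *ᵥ (Q *ᵥ x₂)) =
      Q *ᵥ x₁ ⬝ᵥ L *ᵥ (Q *ᵥ x₂) -
        (Q *ᵥ x₁ ⬝ᵥ L *ᵥ d₀) * (d₀ ⬝ᵥ L *ᵥ (Q *ᵥ x₂)) / (d₀ ⬝ᵥ L *ᵥ d₀) := by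
  obtain ⟨w₁, hw₁, hQ'w₁⟩ := exists_transpose_mulVec_eq_and_mulVec_eq hsplit hCd₀ hlift hz hr x₁
  obtain ⟨w₂, -, hQ'w₂⟩ := exists_transpose_mulVec_eq_and_mulVec_eq hsplit hCd₀ hlift hz hr x₂
  have hpair := hQ.mulVec_dotProduct_mulVec_mulVec_s18 hL
  rw [← hQ'w₁, ← hQ'w₂, (hP.mul_mul_transpose C).mulVec_dotProduct_mulVec_mulVec_s18 hL',
    hQ'w₂, dotProduct_mulVec, ← mulVec_transpose, hw₁, ← hz, hpair, hpair, hpair, hpair,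
    sub_dotProduct, smul_dotProduct, smul_eq_mul, dotProduct_comm (Q *ᵥ z) x₁,
    dotProduct_comm (Q *ᵥ z) z]
  ring

end Contraction

end Matrix

theorem rayleigh_law_energy_pairing_matrix_form_general
    {n m : ℕ}
    (B : Matrix (Fin (n + 1)) (Fin (m + 1)) ℝ)
    (hker : ∀ v : Fin (n + 1) → ℝ, Bᵀ.mulVec v = 0 ↔ ∃ c : ℝ, v = fun _ => c)
    (d : Fin (m + 1) → ℝ) (hd : ∀ i, 0 < d i)
    (e : Fin (m + 1)) (a : Fin n)
    (he : (fun i => B i e)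
      = (Pi.single a.castSucc 1 - Pi.single (Fin.last n) 1 : Fin (n + 1) → ℝ))
    (C : Matrix (Fin n) (Fin (n + 1)) ℝ)
    (hC : ∀ i j, C i j = if j = Fin.last n then (if i = a then (1 : ℝ) else 0)
      else if j = i.castSucc then 1 else 0)
    (L : Matrix (Fin (n + 1)) (Fin (n + 1)) ℝ)
    (hL : (B * (Matrix.diagonal d)⁻¹ * Bᵀ) * L * (B * (Matrix.diagonal d)⁻¹ * Bᵀ)
        = B * (Matrix.diagonal d)⁻¹ * Bᵀ)
    (L' : Matrix (Fin n) (Fin n) ℝ)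
    (hL' : ((C * B.submatrix id e.succAbove) * (Matrix.diagonal (fun i => d (e.succAbove i)))⁻¹
            * (C * B.submatrix id e.succAbove)ᵀ) * L' *
           ((C * B.submatrix id e.succAbove) * (Matrix.diagonal (fun i => d (e.succAbove i)))⁻¹
            * (C * B.submatrix id e.succAbove)ᵀ)
        = (C * B.submatrix id e.succAbove) * (Matrix.diagonal (fun i => d (e.succAbove i)))⁻¹
            * (C * B.submatrix id e.succAbove)ᵀ) :
    let d₀ : Fin (n + 1) → ℝ := Pi.single a.castSucc 1 - Pi.single (Fin.last n) 1
    0 < d₀ ⬝ᵥ L.mulVec d₀ ∧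
    ∀ ν₁ ν₂ : Fin (n + 1) → ℝ, (∑ i, ν₁ i = 0) → (∑ i, ν₂ i = 0) →
      C.mulVec ν₁ ⬝ᵥ L'.mulVec (C.mulVec ν₂) =
        ν₁ ⬝ᵥ L.mulVec ν₂ -
          (ν₁ ⬝ᵥ L.mulVec d₀) * (d₀ ⬝ᵥ L.mulVec ν₂) / (d₀ ⬝ᵥ L.mulVec d₀) := by
  intro d₀
  obtain rfl : C = contractLast a := Matrix.ext hC
  set Q := B * (diagonal d)⁻¹ * Bᵀ
  have hW : ((diagonal d)⁻¹).PosDef := (posDef_diagonal_iff.2 hd).inv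
  have hQ : Q.PosSemidef := by simpa using hW.posSemidef.mul_mul_conjTranspose_same B
  have hrange : ∀ ν, ∑ i, ν i = 0 → ∃ x, Q *ᵥ x = ν := fun _ =>
    exists_mulVec_eq_of_sum_eq_zero (sum_mul_mul_transpose_mulVec_eq_zero ((hker 1).2 ⟨1, rfl⟩) _)
      fun x hx => (hker x).1 (hW.transpose_mulVec_eq_zero_of_mul_mul_transpose hx)
  obtain ⟨z, hz⟩ := hrange d₀ (by simp [d₀])
  have hd₀ : d₀ ≠ 0 := fun h => by
    simpa [d₀, (Fin.castSucc_lt_last a).ne] using congrFun h a.castSucc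
  have hzd₀ : 0 < z ⬝ᵥ d₀ := hz ▸ hQ.dotProduct_mulVec_pos_of_mulVec_ne_zero (hz ▸ hd₀)
  have hQsym : Q.IsSymm := (isSymm_diagonal d).inv.mul_mul_transpose B
  refine ⟨by rwa [← hz, hQsym.mulVec_dotProduct_mulVec_mulVec_s18 hL, hz], fun ν₁ ν₂ h₁ h₂ => ?_⟩
  obtain ⟨x₁, rfl⟩ := hrange ν₁ h₁
  obtain ⟨x₂, rfl⟩ := hrange ν₂ h₂
  have hsplit := mul_inv_diagonal_mul_transpose_eq_succAbove_add B (fun j => (hd j).ne') e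
  rw [show Bᵀ e = d₀ from he] at hsplit
  exact mulVec_dotProduct_mulVec_contraction hQsym
    ((isSymm_diagonal _).inv.mul_mul_transpose _) hL
    (by simpa only [transpose_mul, Matrix.mul_assoc] using hL') hsplit
    (contractLast_mulVec_sub_single a) (fun u hu => ⟨_, contractLast_transpose_mulVec_init a hu⟩)
    hz (dotProduct_comm z d₀ ▸ hzd₀.ne') x₁ x₂

/-- **Theorem A / Theorem 8.2 (Rayleigh's law for energy pairings), matrix form.**
`B` is the incidence matrix of a connected weighted multigraph on `n + 1 ≥ 2` vertices
(each column is `δ_u - δ_v` for distinct `u, v`; the kernel of `Bᵀ` is exactly the span of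
the all-ones vector), `D = diagonal d` has positive diagonal, and `Q = B D⁻¹ Bᵀ` is the
weighted Laplacian. The `e`-th column of `B` is `d₀ := δ_a - δ_last` with `a < last`.
`C` identifies vertex `last` with `a`; `B' := C ∘ (B with column e deleted)` and
`Q' := B' D̂⁻¹ B'ᵀ` is the Laplacian of the contracted graph. If `L`, `L'` are generalized
inverses of `Q`, `Q'`, then `d₀ᵀ L d₀ > 0`, and for all balanced `ν₁, ν₂`:
`(C ν₁)ᵀ L' (C ν₂) = ν₁ᵀ L ν₂ - (ν₁ᵀ L d₀)(d₀ᵀ L ν₂)/(d₀ᵀ L d₀)`. -/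
theorem rayleigh_law_energy_pairing_matrix_form
    {n m : ℕ} (hn : 1 ≤ n)
    (B : Matrix (Fin (n + 1)) (Fin (m + 1)) ℝ)
    (hcols : ∀ j : Fin (m + 1), ∃ u v : Fin (n + 1), u ≠ v ∧
      (fun i => B i j) = (Pi.single u 1 - Pi.single v 1 : Fin (n + 1) → ℝ))
    (hker : ∀ v : Fin (n + 1) → ℝ, Bᵀ.mulVec v = 0 ↔ ∃ c : ℝ, v = fun _ => c)
    (d : Fin (m + 1) → ℝ) (hd : ∀ i, 0 < d i)
    (e : Fin (m + 1)) (a : Fin n)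
    (he : (fun i => B i e)
      = (Pi.single a.castSucc 1 - Pi.single (Fin.last n) 1 : Fin (n + 1) → ℝ))
    (C : Matrix (Fin n) (Fin (n + 1)) ℝ)
    (hC : ∀ i j, C i j = if j = Fin.last n then (if i = a then (1 : ℝ) else 0)
      else if j = i.castSucc then 1 else 0)
    (L : Matrix (Fin (n + 1)) (Fin (n + 1)) ℝ)
    (hL : (B * (Matrix.diagonal d)⁻¹ * Bᵀ) * L * (B * (Matrix.diagonal d)⁻¹ * Bᵀ)
        = B * (Matrix.diagonal d)⁻¹ * Bᵀ)
    (L' : Matrix (Fin n) (Fin n) ℝ)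
    (hL' : ((C * B.submatrix id e.succAbove) * (Matrix.diagonal (fun i => d (e.succAbove i)))⁻¹
            * (C * B.submatrix id e.succAbove)ᵀ) * L' *
           ((C * B.submatrix id e.succAbove) * (Matrix.diagonal (fun i => d (e.succAbove i)))⁻¹
            * (C * B.submatrix id e.succAbove)ᵀ)
        = (C * B.submatrix id e.succAbove) * (Matrix.diagonal (fun i => d (e.succAbove i)))⁻¹
            * (C * B.submatrix id e.succAbove)ᵀ) :
    let d₀ : Fin (n + 1) → ℝ := Pi.single a.castSucc 1 - Pi.single (Fin.last n) 1
    0 < d₀ ⬝ᵥ L.mulVec d₀ ∧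
    ∀ ν₁ ν₂ : Fin (n + 1) → ℝ, (∑ i, ν₁ i = 0) → (∑ i, ν₂ i = 0) →
      C.mulVec ν₁ ⬝ᵥ L'.mulVec (C.mulVec ν₂) =
        ν₁ ⬝ᵥ L.mulVec ν₂ -
          (ν₁ ⬝ᵥ L.mulVec d₀) * (d₀ ⬝ᵥ L.mulVec ν₂) / (d₀ ⬝ᵥ L.mulVec d₀) :=
  rayleigh_law_energy_pairing_matrix_form_general B hker d hd e a he C hC L hL L' hL'
end
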